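/- arXiv:math/0011121 — 10 statements merged into one kernel-verified Lean document; each statement's English description precedes it below -/
import Mathlib

section
/- The functor from the category of schemes to the category of functors CommRing → Type, sending a scheme X to the functor R ↦ Hom_{Sch}(Spec R, X) (and a morphism of schemes to the induced natural transformation given by composition), is fully faithful. -/
open CategoryTheory AlgebraicGeometry

universe u

/-- The functor of points: a scheme `X` is sent to the functor
`R ↦ Hom_Sch(Spec R, X)` on commutative rings. -/
noncomputable def schemeToFunctorOfPoints :
    Scheme.{u} ⥤ (CommRingCat.{u} ⥤ Type u) where
  obj X :=
    { obj := fun R => Spec R ⟶ X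
      map := fun f => TypeCat.ofHom fun g => Spec.map f ≫ g
      map_id := fun R => by ext g; simp
      map_comp := fun f g => by
        ext h
        simp [Spec.map_comp, Category.assoc] }
  map f :=
    { app := fun R => TypeCat.ofHom fun g => g ≫ f
      naturality := fun R S φ => by ext g; simp }
  map_id X := by
    apply NatTrans.ext
    ext R g
    simp
  map_comp f g := by
    apply NatTrans.ext
    ext R h
    simp

/-
A morphism of schemes is determined by its composites with maps from affine schemes, since
every scheme has an affine open cover; this gives faithfulness. For fullness, a natural
transformation `α` yields a morphism `α(ιᵢ) : Spec Rᵢ ⟶ Y` on each chart `ιᵢ` of an affine open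
cover of `X`. Naturality, extended through the full faithfulness of `Spec` to all morphisms
between affine schemes, makes these agree on the overlaps `Spec Rᵢ ×_X Spec Rⱼ` (tested again on
affine points), so they glue to a morphism `X ⟶ Y`, and pulling the cover back along an
arbitrary `g : Spec R ⟶ X` shows that it induces `α`.
-/

open CategoryTheory.Limits

lemma AlgebraicGeometry.Scheme.hom_ext_of_comp_spec {X Y : Scheme.{u}} {f g : X ⟶ Y}
    (h : ∀ (R : CommRingCat.{u}) (φ : Spec R ⟶ X), φ ≫ f = φ ≫ g) : f = g :=
  X.affineOpenCover.openCover.hom_ext f g fun _ => h _ _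

namespace schemeToFunctorOfPoints

variable {X Y : Scheme.{u}}
  (α : schemeToFunctorOfPoints.{u}.obj X ⟶ schemeToFunctorOfPoints.{u}.obj Y)

/-- Unlike `α.app R g`, whose argument has type `Spec R ⟶ X` only after unfolding the point
functor, this wrapper is type-correct at reducible transparency, so `rw` can work with it. -/
def pointsMap {R : CommRingCat.{u}} (g : Spec R ⟶ X) : Spec R ⟶ Y := α.app R g

lemma pointsMap_comp {R S : CommRingCat.{u}} (h : Spec S ⟶ Spec R) (g : Spec R ⟶ X) :
    pointsMap α (h ≫ g) = h ≫ pointsMap α g := by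
  rw [← Spec.map_preimage h]
  exact ConcreteCategory.congr_hom (α.naturality (Spec.preimage h)) g

lemma pullback_fst_comp_pointsMap {R₁ R₂ : CommRingCat.{u}} (g₁ : Spec R₁ ⟶ X)
    (g₂ : Spec R₂ ⟶ X) :
    pullback.fst g₁ g₂ ≫ pointsMap α g₁ = pullback.snd g₁ g₂ ≫ pointsMap α g₂ :=
  Scheme.hom_ext_of_comp_spec fun _ φ => by
    rw [← Category.assoc, ← pointsMap_comp, ← Category.assoc, ← pointsMap_comp, Category.assoc,
      pullback.condition, Category.assoc]

variable (𝒰 : X.AffineOpenCover)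

noncomputable def glue : X ⟶ Y :=
  𝒰.openCover.glueMorphisms (fun i => pointsMap α (𝒰.f i)) fun i j =>
    pullback_fst_comp_pointsMap α (𝒰.f i) (𝒰.f j)

lemma comp_glue {R : CommRingCat.{u}} (g : Spec R ⟶ X) : g ≫ glue α 𝒰 = pointsMap α g :=
  Scheme.Cover.hom_ext (𝒰.openCover.pullback₁ g) _ _ fun (i : 𝒰.I₀) =>
    calc pullback.fst g (𝒰.f i) ≫ g ≫ glue α 𝒰
        = pullback.snd g (𝒰.f i) ≫ 𝒰.f i ≫ glue α 𝒰 := pullback.condition_assoc _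
      _ = pullback.snd g (𝒰.f i) ≫ pointsMap α (𝒰.f i) :=
        congrArg _ (𝒰.openCover.ι_glueMorphisms _ _ i)
      _ = pullback.fst g (𝒰.f i) ≫ pointsMap α g := (pullback_fst_comp_pointsMap α g _).symm

noncomputable def fullyFaithful : schemeToFunctorOfPoints.{u}.FullyFaithful where
  preimage α := glue α (Scheme.affineOpenCover _)
  map_preimage α := by
    ext R g
    exact comp_glue α _ g
  preimage_map _ := Scheme.hom_ext_of_comp_spec fun _ φ => comp_glue _ _ φ

end schemeToFunctorOfPoints

/-- The functor of points embedding of schemes into functors `CommRing ⥤ Type` is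
fully faithful. -/
theorem schemeToFunctorOfPoints_full_and_faithful :
    schemeToFunctorOfPoints.{u}.Full ∧ schemeToFunctorOfPoints.{u}.Faithful :=
  ⟨schemeToFunctorOfPoints.fullyFaithful.full, schemeToFunctorOfPoints.fullyFaithful.faithful⟩
end

section
/- Let G be a finite group acting by ring automorphisms on a commutative ring S, and let R = S^G be the subring of G-fixed elements. Then (1) the map Spec S → Spec R sending a prime ideal q of S to q ∩ R is surjective, and (2) G acts transitively on its fibers: if q and r are prime ideals of S with q ∩ R = r ∩ R, then there exists g ∈ G with g • q = r. -/
open Pointwise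

/-- The subring of `G`-fixed points of a ring `S` with an action of `G` by ring
automorphisms. -/
def fixedSubring (G S : Type*) [Monoid G] [CommRing S] [MulSemiringAction G S] :
    Subring S where
  carrier := {s : S | ∀ g : G, g • s = s}
  mul_mem' := fun {a b} ha hb g => by rw [smul_mul', ha g, hb g]
  one_mem' := fun g => smul_one g
  add_mem' := fun {a b} ha hb g => by rw [smul_add, ha g, hb g]
  zero_mem' := fun g => smul_zero g
  neg_mem' := fun {a} ha g => by rw [smul_neg, ha g]

namespace fixedSubring

instance instSMulCommClass (G S : Type*) [Monoid G] [CommRing S] [MulSemiringAction G S] :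
    SMulCommClass G (fixedSubring G S) S where
  smul_comm g r s := by
    change g • ((r : S) * s) = (r : S) * g • s
    rw [smul_mul', r.2 g]

instance instIsInvariant (G S : Type*) [Group G] [CommRing S] [MulSemiringAction G S] :
    Algebra.IsInvariant (fixedSubring G S) S G :=
  ⟨fun s hs => ⟨⟨s, hs⟩, rfl⟩⟩

end fixedSubring

/-- For a finite group `G` acting on a commutative ring `S` with fixed subring `R = Sᴳ`,
the map `Spec S → Spec R` is surjective and `G` acts transitively on its fibres. -/
theorem spec_surjective_and_transitive_of_finite_group_action
    (G S : Type*) [Group G] [Finite G] [CommRing S] [MulSemiringAction G S] :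
    Function.Surjective
      (PrimeSpectrum.comap (fixedSubring G S).subtype :
        PrimeSpectrum S → PrimeSpectrum (fixedSubring G S)) ∧
    ∀ q r : Ideal S, q.IsPrime → r.IsPrime →
      Ideal.comap (fixedSubring G S).subtype q = Ideal.comap (fixedSubring G S).subtype r →
      ∃ g : G, g • q = r := by
  have : Algebra.IsIntegral (fixedSubring G S) S :=
    Algebra.IsInvariant.isIntegral (fixedSubring G S) S G
  refine ⟨Algebra.IsIntegral.comap_surjective (fixedSubring G S) S, fun q r _ _ hqr => ?_⟩
  obtain ⟨g, hg⟩ := Algebra.IsInvariant.exists_smul_of_under_eq (fixedSubring G S) S G q r hqr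
  exact ⟨g, hg.symm⟩
end

section
/- Let R be a commutative ring and I₁, …, I_m a finite family of ideals of R such that every prime ideal of R contains exactly one of the ideals I_α. Then there exists a unique family of ideals J₁, …, J_m such that J_α ⊆ I_α ⊆ √(J_α) for every α and the natural ring homomorphism R → ∏_{α=1}^m R/J_α (with components the quotient maps) is an isomorphism. -/
/-!
The closed sets `V(I α)` partition `Spec R` into finitely many pieces, so each is clopen and
equals `D(e α)` for a unique idempotent `e α`; these form a complete family of orthogonal
idempotents, and `J α = (1 - e α)` does the job. Conversely, if `R ≅ ∏ R ⧸ J α`, then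
`J α = (1 - f α)` for the idempotent `f α` corresponding to the `α`-th factor, and
`J α ⊆ I α ⊆ √(J α)` says `D(f α) = V(I α) = D(e α)`, whence `f α = e α`.
-/

section

open Ideal PrimeSpectrum

variable {R : Type*} [CommRing R] {ι : Type*}

lemma IsIdempotentElem.mem_of_mem_radical {e : R} {I : Ideal R} (he : IsIdempotentElem e)
    (h : e ∈ I.radical) : e ∈ I := by
  obtain ⟨_ | n, hn⟩ := h
  · exact (I.eq_top_iff_one.mpr (by simpa using hn)) ▸ Submodule.mem_top
  · rwa [he.pow_succ_eq] at hn

lemma CompleteOrthogonalIdempotents.of_existsUnique_mem_basicOpen [Fintype ι] {e : ι → R}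
    (he : ∀ i, IsIdempotentElem (e i))
    (h : ∀ p : PrimeSpectrum R, ∃! i, p ∈ basicOpen (e i)) :
    CompleteOrthogonalIdempotents e := by
  refine .of_prod_one_sub ⟨he, fun i j hij => ?_⟩ ?_
  · refine ((he i).mul (he j)).eq_zero_of_isNilpotent <| nilpotent_iff_mem_prime.mpr
      fun p hp => by_contra fun hij' => hij ?_
    have hi : e i ∉ p := fun hi => hij' (p.mul_mem_right _ hi)
    have hj : e j ∉ p := fun hj => hij' (p.mul_mem_left _ hj)
    exact (h ⟨p, hp⟩).unique hi hj
  · refine (Finset.prod_induction _ IsIdempotentElem (fun _ _ ha hb => ha.mul hb) .one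
      fun i _ => (he i).one_sub).eq_zero_of_isNilpotent <| nilpotent_iff_mem_prime.mpr
      fun p hp => ?_
    obtain ⟨i, hi, -⟩ := h ⟨p, hp⟩
    refine p.prod_mem (Finset.mem_univ i) ?_
    exact (hp.mem_or_mem_of_mul_eq_zero (he i).mul_one_sub_self).resolve_left hi

namespace PrimeSpectrum

lemma isClopen_zeroLocus_of_existsUnique_mem [Finite ι] {I : ι → Ideal R}
    (h : ∀ p : PrimeSpectrum R, ∃! i, p ∈ zeroLocus (I i)) (i : ι) :
    IsClopen (zeroLocus (I i : Set R)) := by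
  refine ⟨isClosed_zeroLocus _, ?_⟩
  have hcompl : (zeroLocus (I i : Set R))ᶜ = ⋃ j ∈ ({i}ᶜ : Set ι), zeroLocus (I j) := by
    ext p
    obtain ⟨k, hk, hunique⟩ := h p
    simp only [Set.mem_compl_iff, Set.mem_iUnion, Set.mem_singleton_iff, exists_prop]
    constructor
    · exact fun hi => ⟨k, fun hki => hi (hki ▸ hk), hk⟩
    · rintro ⟨j, hji, hj⟩ hi
      exact hji ((hunique j hj).trans (hunique i hi).symm)
  rw [← isClosed_compl_iff, hcompl]
  exact (Set.toFinite _).isClosed_biUnion fun j _ => isClosed_zeroLocus _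

lemma zeroLocus_span_one_sub {e : R} (he : IsIdempotentElem e) :
    zeroLocus (span {1 - e} : Set R) = basicOpen e := by
  rw [zeroLocus_span, basicOpen_eq_zeroLocus_of_isIdempotentElem e he]

lemma span_one_sub_le_and_le_radical_iff {e : R} (he : IsIdempotentElem e) {I : Ideal R} :
    (span {1 - e} ≤ I ∧ I ≤ (span {1 - e}).radical) ↔
      zeroLocus (I : Set R) = basicOpen e := by
  rw [← zeroLocus_span_one_sub he, zeroLocus_eq_iff]
  refine ⟨fun ⟨hle, hrad⟩ => le_antisymm (radical_le_radical_iff.mpr hrad) (radical_mono hle),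
    fun hrad => ⟨?_, hrad ▸ le_radical⟩⟩
  rw [span_singleton_le_iff_mem]
  exact he.one_sub.mem_of_mem_radical (hrad ▸ le_radical (mem_span_singleton_self _))

end PrimeSpectrum

lemma exists_isIdempotentElem_eq_span_one_sub_of_bijective [DecidableEq ι] {J : ι → Ideal R}
    (hJ : Function.Bijective (RingHom.pi fun i => Ideal.Quotient.mk (J i))) :
    ∃ e : ι → R, (∀ i, IsIdempotentElem (e i)) ∧ J = fun i => span {1 - e i} := by
  let φ := RingEquiv.ofBijective _ hJ
  refine ⟨fun i => φ.symm (Pi.single i 1), fun i => ?_, ?_⟩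
  · exact IsIdempotentElem.map (f := φ.symm) (by simp [IsIdempotentElem, ← Pi.single_mul])
  funext i
  have hproj : (Pi.evalRingHom _ i).comp (φ : R →+* ∀ i, R ⧸ J i) = Ideal.Quotient.mk (J i) := rfl
  rw [← Ideal.mk_ker (I := J i), ← hproj, ← RingHom.comap_ker, RingHom.ker_evalRingHom,
    Ideal.comap_coe, ← Ideal.map_symm, Ideal.map_span, Set.image_singleton, map_sub, map_one]

end

/-- If every prime of `R` contains exactly one of the ideals `I α`, then there is a
unique family of ideals `J α` with `J α ⊆ I α ⊆ √(J α)` such that the natural map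
`R → ∏ α, R/J α` is an isomorphism. -/
theorem exists_unique_product_decomposition {R : Type*} [CommRing R] (m : ℕ)
    (I : Fin m → Ideal R)
    (h : ∀ P : Ideal R, P.IsPrime → ∃! α : Fin m, I α ≤ P) :
    ∃! J : Fin m → Ideal R,
      (∀ α, J α ≤ I α ∧ I α ≤ (J α).radical) ∧
      Function.Bijective (Pi.ringHom fun α => Ideal.Quotient.mk (J α)) := by
  have hI : ∀ p : PrimeSpectrum R, ∃! α, p ∈ PrimeSpectrum.zeroLocus (I α) :=
    fun p => h p.asIdeal p.isPrime
  choose e he hzero using fun α =>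
    PrimeSpectrum.exists_idempotent_basicOpen_eq_of_isClopen
      (PrimeSpectrum.isClopen_zeroLocus_of_existsUnique_mem hI α)
  have he_complete : CompleteOrthogonalIdempotents e :=
    .of_existsUnique_mem_basicOpen he (by simpa only [hzero, SetLike.mem_coe] using hI)
  refine ⟨fun α => Ideal.span {1 - e α}, ⟨fun α => ?_, he_complete.bijective_pi⟩, ?_⟩
  · exact (PrimeSpectrum.span_one_sub_le_and_le_radical_iff (he α)).mpr (hzero α)
  rintro J ⟨hJI, hJ⟩
  obtain ⟨f, hf, rfl⟩ := exists_isIdempotentElem_eq_span_one_sub_of_bijective hJ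
  funext α
  have hfe : PrimeSpectrum.basicOpen (f α) = PrimeSpectrum.basicOpen (e α) := SetLike.ext' <|
    ((PrimeSpectrum.span_one_sub_le_and_le_radical_iff (hf α)).mp (hJI α)).symm.trans (hzero α)
  rw [PrimeSpectrum.basicOpen_injOn_isIdempotentElem (hf α) (he α) hfe]
end

section
/- (Weierstrass division) Let R be a commutative ring, n ∈ ℕ, and g ∈ R⟦X⟧ a power series whose constant coefficient is nilpotent, whose coefficient in each degree k < n is nilpotent, and whose coefficient in degree n is a unit. Regard R⟦X⟧ as an R⟦Y⟧-algebra via the substitution homomorphism R⟦Y⟧ → R⟦X⟧ sending a series f(Y) to f(g(X)). Then R⟦X⟧ is a free R⟦Y⟧-module with basis 1, X, X², …, X^{n−1}. -/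
open scoped Classical

/-- Substitution of a power series `g` (with nilpotent constant term) into a power
series `f`: the coefficients of `f(g)` are the eventual values of the coefficients of
the partial evaluations `(trunc L f)(g)`. -/
noncomputable def PowerSeries.substOf {R : Type*} [CommRing R] (g f : PowerSeries R) :
    PowerSeries R :=
  PowerSeries.mk fun m =>
    if h : ∃ c : R, ∃ K : ℕ, ∀ L : ℕ, K ≤ L →
        PowerSeries.coeff m (Polynomial.aeval g (PowerSeries.trunc L f)) = c
    then h.choose else 0

/-!
The coefficients of `g` below degree `n` generate a nilpotent ideal `I`; `R` is trivially
`I`-adically complete and `g` has order `n` modulo `I`, so Weierstrass division by `g` applies: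
every `f` is uniquely `g * q + r` with `deg r < n`. Dividing the quotients again and again gives
`f = r₀ + g r₁ + g² r₂ + ⋯`, and the `i`-th coordinate of `f` is `cᵢ(Y) = ∑ₖ (coeff i rₖ) Yᵏ`.
If `g(0)^N = 0` then `Xᵐ ∣ g^(m + N)`. Hence `f(g)` is the coefficientwise limit of the partial
evaluations `(trunc L f)(g)`, and the error `f - ∑ cᵢ(g) Xⁱ`, being divisible by every power
of `g`, vanishes. For uniqueness, splitting off constant terms writes
`∑ cᵢ(g) Xⁱ = g · ∑ c'ᵢ(g) Xⁱ + ∑ cᵢ(0) Xⁱ`, and uniqueness of the division of `0` peels off the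
coefficients of the `cᵢ` one at a time.
-/

open PowerSeries

theorem IsAdicComplete.of_isNilpotent {R : Type*} [CommRing R] {I : Ideal R}
    (hI : IsNilpotent I) (M : Type*) [AddCommGroup M] [Module R M] : IsAdicComplete I M := by
  obtain ⟨k, hk⟩ := hI
  have hbot : I ^ k • (⊤ : Submodule R M) = ⊥ := by
    rw [hk, Ideal.zero_eq_bot, Submodule.bot_smul]
  refine { haus' := fun x hx => by simpa [hbot] using hx k,
           prec' := fun f hf => ⟨f k, fun m => ?_⟩ }
  rcases le_total m k with hmk | hkm
  · exact hf hmk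
  · have hfk := hf hkm
    rw [hbot, SModEq.bot] at hfk
    rw [hfk]

theorem Ideal.isNilpotent_span_of_finite {R : Type*} [CommRing R] {s : Set R} (hs : s.Finite)
    (h : ∀ x ∈ s, IsNilpotent x) : IsNilpotent (Ideal.span s) :=
  (Ideal.FG.isNilpotent_iff_le_nilradical (Submodule.fg_span hs)).mpr (Ideal.span_le.mpr h)

theorem Ideal.ne_top_of_isNilpotent {R : Type*} [CommRing R] [Nontrivial R] {I : Ideal R}
    (hI : IsNilpotent I) : I ≠ ⊤ := by
  rintro rfl
  obtain ⟨k, hk⟩ := hI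
  rw [Ideal.top_pow] at hk
  exact top_ne_bot hk

theorem Polynomial.sum_fin_C_coeff_mul_X_pow {R : Type*} [Semiring R] {n : ℕ} {p : Polynomial R}
    (hp : p.degree < n) : ∑ i : Fin n, C (p.coeff i) * X ^ (i : ℕ) = p := by
  rw [sum_fin (fun i a => C a * X ^ i) (by simp) hp, sum_C_mul_X_pow_eq]

namespace PowerSeries

variable {R : Type*} [CommRing R]

theorem X_pow_dvd_pow_add_of_constantCoeff_pow_eq_zero {g : R⟦X⟧} {N : ℕ}
    (hN : constantCoeff g ^ N = 0) (K : ℕ) : X ^ K ∣ g ^ (K + N) := by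
  rw [eq_X_mul_shift_add_const g, add_pow]
  refine Finset.dvd_sum fun j _ => ?_
  rcases le_or_gt K j with hKj | hjK
  · rw [mul_pow, mul_assoc, mul_assoc]
    exact (pow_dvd_pow X hKj).mul_right _
  · rw [← map_pow, show K + N - j = N + (K - j) by omega, pow_add, hN, zero_mul, map_zero,
      mul_zero, zero_mul]
    exact dvd_zero _

theorem eq_zero_of_forall_pow_dvd {g f : R⟦X⟧} (hg : IsNilpotent (constantCoeff g))
    (hf : ∀ K, g ^ K ∣ f) : f = 0 := by
  obtain ⟨N, hN⟩ := hg
  ext m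
  exact X_pow_dvd_iff.mp
    ((X_pow_dvd_pow_add_of_constantCoeff_pow_eq_zero hN (m + 1)).trans (hf _)) m m.lt_succ_self

theorem coeff_aeval_trunc_eq_coeff_subst {g : R⟦X⟧} {N : ℕ} (hN : constantCoeff g ^ N = 0)
    (f : R⟦X⟧) {m L : ℕ} (hL : m + 1 + N ≤ L) :
    coeff m (Polynomial.aeval g (trunc L f)) = coeff m (subst g f) := by
  have hg : HasSubst g := ⟨N, hN⟩
  have hdvd : X ^ (m + 1) ∣ g ^ L :=
    (X_pow_dvd_pow_add_of_constantCoeff_pow_eq_zero hN _).trans (pow_dvd_pow g hL)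
  conv_rhs => rw [eq_X_pow_mul_shift_add_trunc L f]
  rw [subst_add hg, subst_mul hg, subst_pow hg, subst_X hg, subst_coe hg, map_add,
    X_pow_dvd_iff.mp (hdvd.mul_right _) m m.lt_succ_self, zero_add]

theorem substOf_eq_subst {g : R⟦X⟧} (hg : IsNilpotent (constantCoeff g)) (f : R⟦X⟧) :
    substOf g f = subst g f := by
  obtain ⟨N, hN⟩ := hg
  ext m
  have hev : ∃ c K, ∀ L, K ≤ L → coeff m (Polynomial.aeval g (trunc L f)) = c :=
    ⟨_, m + 1 + N, fun L hL => coeff_aeval_trunc_eq_coeff_subst hN f hL⟩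
  obtain ⟨K, hK⟩ := hev.choose_spec
  rw [substOf, coeff_mk, dif_pos hev, ← hK (max K (m + 1 + N)) le_sup_left,
    coeff_aeval_trunc_eq_coeff_subst hN f le_sup_right]

theorem order_map_quotient_eq {I : Ideal R} (hI : I ≠ ⊤) {g : R⟦X⟧} {n : ℕ}
    (hlt : ∀ k < n, coeff k g ∈ I) (hn : IsUnit (coeff n g)) :
    (g.map (Ideal.Quotient.mk I)).order = n := by
  have : Nontrivial (R ⧸ I) := Ideal.Quotient.nontrivial_iff.mpr hI
  rw [order_eq_nat]
  refine ⟨by simpa using (hn.map (Ideal.Quotient.mk I)).ne_zero, fun k hk => ?_⟩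
  simpa [Ideal.Quotient.eq_zero_iff_mem] using hlt k hk

section SumSubstMulXPow

variable {g : R⟦X⟧} {n : ℕ}

noncomputable def sumSubstMulXPow (g : R⟦X⟧) (c : Fin n → R⟦X⟧) : R⟦X⟧ :=
  ∑ i, subst g (c i) * X ^ (i : ℕ)

theorem sumSubstMulXPow_sub (hg : HasSubst g) (c c' : Fin n → R⟦X⟧) :
    sumSubstMulXPow g (c - c') = sumSubstMulXPow g c - sumSubstMulXPow g c' := by
  simp only [sumSubstMulXPow, Pi.sub_apply, subst_sub hg, sub_mul, Finset.sum_sub_distrib]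

theorem sumSubstMulXPow_eq_mul_shift_add (hg : HasSubst g) (c : Fin n → R⟦X⟧) :
    sumSubstMulXPow g c =
      g * sumSubstMulXPow g (fun i => mk fun p => coeff (p + 1) (c i) : Fin n → R⟦X⟧) +
        ((∑ i : Fin n, Polynomial.C (constantCoeff (c i)) * Polynomial.X ^ (i : ℕ) :
          Polynomial R) : R⟦X⟧) := by
  conv_lhs => rw [sumSubstMulXPow]; enter [2, i]; rw [eq_X_mul_shift_add_const (c i)]
  simp only [sumSubstMulXPow, subst_add hg, subst_mul hg, subst_X hg, subst_C, Finset.mul_sum,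
    add_mul, Finset.sum_add_distrib, mul_assoc]
  congr 1
  rw [← Polynomial.coeToPowerSeries.ringHom_apply, map_sum]
  simp [Polynomial.coeToPowerSeries.ringHom_apply]
  rfl

variable {I : Ideal R} [IsAdicComplete I R]

theorem sumSubstMulXPow_eq_zero (H : g.IsWeierstrassDivisorAt I) (hg : HasSubst g)
    (hn : (g.map (Ideal.Quotient.mk I)).order.toNat = n) {c : Fin n → R⟦X⟧}
    (hc : sumSubstMulXPow g c = 0) :
    (∀ i, constantCoeff (c i) = 0) ∧
      sumSubstMulXPow g (fun i => mk fun p => coeff (p + 1) (c i) : Fin n → R⟦X⟧) = 0 := by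
  have hdecomp := sumSubstMulXPow_eq_mul_shift_add hg c
  set r : Polynomial R :=
    ∑ i : Fin n, Polynomial.C (constantCoeff (c i)) * Polynomial.X ^ (i : ℕ)
  set q := sumSubstMulXPow g (fun i => mk fun p => coeff (p + 1) (c i) : Fin n → R⟦X⟧)
  obtain ⟨hq, hr⟩ := H.eq_zero_of_mul_eq (q := q) (r := -r)
    (by rw [Polynomial.degree_neg, hn]; exact Polynomial.degree_sum_fin_lt _)
    (by rw [Polynomial.coe_neg]; linear_combination hc - hdecomp)
  refine ⟨fun i => ?_, hq⟩
  simpa [r, Polynomial.finsetSum_coeff, Polynomial.coeff_C_mul_X_pow, Fin.val_inj] using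
    congrArg (Polynomial.coeff · i) hr

theorem sumSubstMulXPow_injective (H : g.IsWeierstrassDivisorAt I) (hg : HasSubst g)
    (hn : (g.map (Ideal.Quotient.mk I)).order.toNat = n) :
    Function.Injective (sumSubstMulXPow g : (Fin n → R⟦X⟧) → R⟦X⟧) := by
  suffices h : ∀ j (c : Fin n → R⟦X⟧), sumSubstMulXPow g c = 0 → ∀ i, coeff j (c i) = 0 by
    intro c c' hcc
    rw [← sub_eq_zero]
    funext i
    ext j
    exact h j _ (by rw [sumSubstMulXPow_sub hg, hcc, sub_self]) i
  intro j
  induction j with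
  | zero => exact fun c hc => by simpa using (sumSubstMulXPow_eq_zero H hg hn hc).1
  | succ j ih =>
    intro c hc i
    simpa using ih _ (sumSubstMulXPow_eq_zero H hg hn hc).2 i

theorem sumSubstMulXPow_surjective (H : g.IsWeierstrassDivisorAt I) (hg : HasSubst g)
    (hn : (g.map (Ideal.Quotient.mk I)).order.toNat = n) :
    Function.Surjective (sumSubstMulXPow g : (Fin n → R⟦X⟧) → R⟦X⟧) := by
  let c : R⟦X⟧ → Fin n → R⟦X⟧ := fun f i =>
    mk fun k => (H.mod ((fun f => H.div f)^[k] f)).coeff i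
  have hstep : ∀ f, f - sumSubstMulXPow g (c f) =
      g * (H.div f - sumSubstMulXPow g (c (H.div f))) := by
    intro f
    have hdiv := H.isWeierstrassDivisionAt_div_mod f
    have hshift : (fun i => mk fun p => coeff (p + 1) (c f i) : Fin n → R⟦X⟧) = c (H.div f) := by
      funext i
      ext p
      simp [c, Function.iterate_succ_apply]
    have hconst : ∀ i, constantCoeff (c f i) = (H.mod f).coeff i := fun i => by simp [c]
    rw [sumSubstMulXPow_eq_mul_shift_add hg, hshift]
    simp only [hconst]
    rw [Polynomial.sum_fin_C_coeff_mul_X_pow (hn ▸ hdiv.degree_lt)]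
    linear_combination hdiv.eq_mul_add
  have hdvd : ∀ K f, g ^ K ∣ f - sumSubstMulXPow g (c f) := by
    intro K
    induction K with
    | zero => exact fun f => one_dvd _
    | succ K ih =>
      intro f
      rw [hstep, pow_succ']
      exact mul_dvd_mul_left g (ih _)
  exact fun f => ⟨c f, (sub_eq_zero.mp (eq_zero_of_forall_pow_dvd hg (hdvd · f))).symm⟩

end SumSubstMulXPow

end PowerSeries

/-- Weierstrass division: if `g` is a Weierstrass series of degree `n` (nilpotent
constant term, nilpotent coefficients below degree `n`, unit coefficient in degree
`n`), then `R⟦X⟧`, regarded as an `R⟦Y⟧`-module via `f • h = f(g)·h`, is free with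
basis `1, X, …, X^(n-1)`: every `h` is uniquely `h = ∑ i < n, (c i)(g) · Xⁱ`. -/
theorem weierstrass_division {R : Type*} [CommRing R] (n : ℕ) (g : PowerSeries R)
    (h0 : IsNilpotent (PowerSeries.constantCoeff g))
    (hlt : ∀ k < n, IsNilpotent (PowerSeries.coeff k g))
    (hn : IsUnit (PowerSeries.coeff n g)) :
    ∀ h : PowerSeries R, ∃! c : Fin n → PowerSeries R,
      h = ∑ i : Fin n, PowerSeries.substOf g (c i) * PowerSeries.X ^ (i : ℕ) := by
  intro h
  rcases subsingleton_or_nontrivial R with _ | _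
  · exact ⟨0, Subsingleton.elim _ _, fun _ _ => Subsingleton.elim _ _⟩
  set I := Ideal.span ((coeff · g) '' Set.Iio n)
  have hI : IsNilpotent I :=
    Ideal.isNilpotent_span_of_finite ((Set.finite_Iio n).image _) (by simpa using hlt)
  have := IsAdicComplete.of_isNilpotent hI R
  have hord : (g.map (Ideal.Quotient.mk I)).order.toNat = n := by
    rw [order_map_quotient_eq (Ideal.ne_top_of_isNilpotent hI)
      (fun k hk => Ideal.subset_span ⟨k, hk, rfl⟩) hn, ENat.toNat_natCast]
  have H : g.IsWeierstrassDivisorAt I := by rwa [IsWeierstrassDivisorAt, hord]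
  have hbij : Function.Bijective (sumSubstMulXPow g : (Fin n → R⟦X⟧) → R⟦X⟧) :=
    ⟨sumSubstMulXPow_injective H h0 hord, sumSubstMulXPow_surjective H h0 hord⟩
  simp_rw [substOf_eq_subst h0, eq_comm (a := h)]
  exact hbij.existsUnique h
end

section
/- Let R be a commutative ring and f = Σ_{k∈ℤ} a_k X^k a formal Laurent series over R (so a_k = 0 for all sufficiently negative k). Then f is a unit in the Laurent series ring R((X)) if and only if there exists a finitely supported family (e_k)_{k∈ℤ} of elements of R with e_i·e_j = 0 for i ≠ j, e_k² = e_k, and Σ_k e_k = 1, such that for every k: e_k·a_j is nilpotent for all j < k, and e_k·a_k is a unit of the ring e_k·R (i.e. there exists b ∈ R with a_k·b·e_k = e_k). -/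
/-!
If `f * g = 1`, then modulo every prime `p` of `R` the images of `f` and `g` are mutually inverse
Laurent series over the domain `R ⧸ p`, so `f` has a leading degree `k` modulo `p`, with
`f.coeff k * g.coeff (-k) ≡ 1 [p]`. Written with this congruence instead of `f.coeff k ∉ p`, the
locus of primes where the leading degree is `k` is closed; these finitely many loci partition
`Spec R`, hence are clopen and cut out by orthogonal idempotents `e k` summing to `1`. On the
piece `e k` the lower coefficients lie in every prime, i.e. `e k * f.coeff j` is nilpotent.

Conversely, on the piece `e = e k` the series `X⁻ᵏ e f + (1 - e)` is a nilpotent polynomial in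
`X⁻¹` plus a power series with unit constant term, hence a unit; multiplying by `e` shows that
`f` divides `e`, hence `f` divides `∑ e k = 1`.
-/

open Function HahnSeries

theorem Ideal.notMem_of_one_sub_mul_mem {R : Type*} [CommRing R] {I : Ideal R} (hI : I ≠ ⊤)
    {a b : R} (h : 1 - a * b ∈ I) : a ∉ I := fun ha =>
  hI <| I.eq_top_iff_one.mpr <| by simpa using I.add_mem h (I.mul_mem_right b ha)

theorem Set.compl_eq_biUnion_erase_of_pairwise_disjoint {α ι : Type*} [DecidableEq ι]
    (s : Finset ι) {S : ι → Set α} (hdisj : Pairwise (Disjoint on S))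
    (hcover : ∀ x, ∃ i ∈ s, x ∈ S i) (i : ι) : (S i)ᶜ = ⋃ j ∈ s.erase i, S j := by
  ext x
  simp only [Set.mem_compl_iff, Set.mem_iUnion, Finset.mem_erase, exists_prop]
  constructor
  · intro hx
    obtain ⟨j, hj, hxj⟩ := hcover x
    exact ⟨j, ⟨fun hji => hx (hji ▸ hxj), hj⟩, hxj⟩
  · rintro ⟨j, ⟨hji, -⟩, hxj⟩ hxi
    exact Set.disjoint_left.mp (hdisj hji) hxj hxi

namespace PrimeSpectrum

variable {R : Type*} [CommRing R]

theorem eq_zero_of_isIdempotentElem_of_basicOpen_eq_empty {e : R} (he : IsIdempotentElem e)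
    (h : (basicOpen e : Set (PrimeSpectrum R)) = ∅) : e = 0 :=
  he.eq_zero_of_isNilpotent <| (basicOpen_eq_bot_iff e).mp <| by
    rwa [← TopologicalSpace.Opens.coe_eq_empty]

theorem exists_mul_mul_eq_of_basicOpen_le {e a : R} (he : IsIdempotentElem e)
    (h : basicOpen e ≤ basicOpen a) : ∃ b, a * b * e = e := by
  obtain ⟨n, hn⟩ := (basicOpen_le_basicOpen_iff e a).mp h
  have hmem : e ∈ Ideal.span {a} := by
    rw [← he.pow_succ_eq n, pow_succ]
    exact Ideal.mul_mem_right e _ hn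
  obtain ⟨c, hc⟩ := Ideal.mem_span_singleton'.mp hmem
  exact ⟨c, by rw [mul_comm a c, hc, he.eq]⟩

theorem isNilpotent_mul_of_basicOpen_subset_zeroLocus {x a : R}
    (h : (basicOpen x : Set (PrimeSpectrum R)) ⊆ zeroLocus {a}) : IsNilpotent (x * a) := by
  rw [← basicOpen_eq_bot_iff, basicOpen_mul, eq_bot_iff]
  rintro p ⟨hx, ha⟩
  exact ha (Set.singleton_subset_iff.mp (h hx))

theorem exists_orthogonalIdempotents_basicOpen_eq {ι : Type*} (s : Finset ι)
    {S : ι → Set (PrimeSpectrum R)} (hS : ∀ i, IsClosed (S i))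
    (hdisj : Pairwise (Disjoint on S)) (hcover : ∀ p, ∃ i ∈ s, p ∈ S i) :
    ∃ e : ι → R, OrthogonalIdempotents e ∧ (∀ i, (basicOpen (e i) : Set _) = S i) ∧
      support e ⊆ s ∧ ∑ i ∈ s, e i = 1 := by
  classical
  have hcompl := Set.compl_eq_biUnion_erase_of_pairwise_disjoint s hdisj hcover
  have hclopen : ∀ i, IsClopen (S i) := fun i => ⟨hS i, by
    rw [← isClosed_compl_iff, hcompl]
    exact isClosed_biUnion_finset fun j _ => hS j⟩
  choose e he hSe using fun i => exists_idempotent_basicOpen_eq_of_isClopen (hclopen i)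
  replace hSe : ∀ i, (basicOpen (e i) : Set _) = S i := fun i => (hSe i).symm
  have horth : OrthogonalIdempotents e := ⟨he, fun i j hij =>
    eq_zero_of_isIdempotentElem_of_basicOpen_eq_empty ((he i).mul (he j)) <| by
      rw [basicOpen_mul, TopologicalSpace.Opens.coe_inf, hSe, hSe]
      exact (hdisj hij).inter_eq⟩
  refine ⟨e, horth, hSe, fun i hi => by_contra fun his => hi ?_, ?_⟩
  · refine eq_zero_of_isIdempotentElem_of_basicOpen_eq_empty (he i) ?_
    refine hSe i ▸ Set.eq_empty_of_forall_notMem fun p hpi => ?_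
    obtain ⟨j, hj, hpj⟩ := hcover p
    exact Set.disjoint_left.mp (hdisj (ne_of_mem_of_not_mem hj his)) hpj hpi
  · refine (sub_eq_zero.mp <| eq_zero_of_isIdempotentElem_of_basicOpen_eq_empty
      horth.isIdempotentElem_sum.one_sub (Set.eq_empty_of_forall_notMem fun p hp => ?_)).symm
    obtain ⟨i, hi, hpi⟩ := hcover p
    rw [← hSe] at hpi
    have hzero : e i * (1 - ∑ j ∈ s, e j) = 0 := by
      rw [mul_sub, mul_one, horth.mul_sum_of_mem hi, sub_self]
    exact hp ((p.isPrime.mem_or_mem (hzero ▸ p.asIdeal.zero_mem)).resolve_left hpi)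

end PrimeSpectrum

theorem HahnSeries.isNilpotent_single {Γ R : Type*} [AddCommMonoid Γ] [PartialOrder Γ]
    [IsOrderedCancelAddMonoid Γ] [Semiring R] (a : Γ) {r : R} (hr : IsNilpotent r) :
    IsNilpotent (single a r) := by
  obtain ⟨n, hn⟩ := hr
  exact ⟨n, by rw [single_pow, hn, single_eq_zero]⟩

namespace LaurentSeries

variable {R : Type*} [CommRing R]

theorem isUnit_of_isNilpotent_coeff_of_isUnit_coeff_zero {f : LaurentSeries R}
    (hneg : ∀ j < 0, IsNilpotent (f.coeff j)) (h0 : IsUnit (f.coeff 0)) : IsUnit f := by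
  set P : PowerSeries R := PowerSeries.mk fun n => f.coeff n
  set N : LaurentSeries R := ∑ j ∈ Finset.Ico f.order 0, single j (f.coeff j)
  have hfPN : f = P + N := by
    ext j
    have hN : N.coeff j = if f.order ≤ j ∧ j < 0 then f.coeff j else 0 := by
      classical
      simp only [N, coeff_sum, coeff_single, ← Finset.mem_Ico]
      convert Finset.sum_ite_eq _ j _
    rw [coeff_add, hN, PowerSeries.coeff_coe, PowerSeries.coeff_mk]
    rcases lt_or_ge j 0 with hj | hj
    · by_cases hjf : f.order ≤ j
      · simp [hj, hjf]
      · simp [hj, hjf, coeff_eq_zero_of_lt_order (not_le.mp hjf)]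
    · simp [hj.not_gt, Int.natAbs_of_nonneg hj]
  have hP : IsUnit P := by
    rwa [PowerSeries.isUnit_iff_constantCoeff, ← PowerSeries.coeff_zero_eq_constantCoeff_apply,
      PowerSeries.coeff_mk]
  have hN : IsNilpotent N := Commute.isNilpotent_sum (fun j hj =>
    isNilpotent_single j (hneg j (Finset.mem_Ico.mp hj).2)) fun _ _ _ _ => Commute.all _ _
  rw [hfPN]
  exact hN.isUnit_add_left_of_commute (hP.map _) (Commute.all _ _)

theorem dvd_C_of_isIdempotentElem {f : LaurentSeries R} {e : R} (he : IsIdempotentElem e) {k : ℤ}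
    (hnil : ∀ j < k, IsNilpotent (e * f.coeff j)) (hunit : ∃ b, f.coeff k * b * e = e) :
    f ∣ C e := by
  obtain ⟨b, hb⟩ := hunit
  set W : LaurentSeries R := single (-k) e * f + C (1 - e)
  have hW : ∀ j, W.coeff j = e * f.coeff (j + k) + if j = 0 then 1 - e else 0 := fun j => by
    rw [coeff_add, C_apply, ← coeff_single_mul_add (b := -k), add_neg_cancel_right]
    split_ifs with hj
    · rw [hj, coeff_single_same]
    · rw [coeff_single_of_ne hj]
  have hWunit : IsUnit W := by
    refine isUnit_of_isNilpotent_coeff_of_isUnit_coeff_zero (fun j hj => ?_) ?_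
    · simpa [hW, hj.ne] using hnil (j + k) (by omega)
    · refine isUnit_iff_exists_inv.mpr ⟨b * e + (1 - e), ?_⟩
      rw [hW, if_pos rfl, zero_add]
      linear_combination e * hb + (2 - f.coeff k - b) * he.eq
  have hCW : C e * W = single (-k) e * f := by
    have : C e * C (1 - e) = (0 : LaurentSeries R) := by
      rw [← map_mul, mul_sub, mul_one, he.eq, sub_self, map_zero]
    rw [mul_add, this, add_zero, ← mul_assoc, C_apply, single_mul_single, zero_add, he.eq]
  refine ⟨single (-k) e * ↑hWunit.unit⁻¹, ?_⟩
  rw [← mul_assoc, mul_comm f, ← hCW, mul_assoc, hWunit.mul_val_inv, mul_one]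

theorem exists_mem_Icc_forall_lt_coeff_mem_of_mul_eq_one {f g : LaurentSeries R}
    (hfg : f * g = 1) (q : Ideal R) [q.IsPrime] :
    ∃ k ∈ Finset.Icc f.order (-g.order),
      (∀ j < k, f.coeff j ∈ q) ∧ 1 - f.coeff k * g.coeff (-k) ∈ q := by
  let φ : R →+* R ⧸ q := Ideal.Quotient.mk q
  set F := f.map φ
  set G := g.map φ
  have hFG : F * G = 1 := by
    have hmul : (f * g).map φ = F * G := HahnSeries.map_mul (φ : R →ₙ+* R ⧸ q)
    rw [← hmul, hfg]
    exact HahnSeries.map_one φ.toMonoidWithZeroHom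
  have hF : F ≠ 0 := left_ne_zero_of_mul_eq_one hFG
  have hG : G ≠ 0 := right_ne_zero_of_mul_eq_one hFG
  have hord : F.order + G.order = 0 := by rw [← order_mul hF hG, hFG, order_one]
  have hGord : G.order = -F.order := by omega
  have hlead : φ (f.coeff F.order) * φ (g.coeff (-F.order)) = 1 := by
    simpa [leadingCoeff_eq, F, G, hord, hFG, hGord] using (coeff_mul_order_add_order F G).symm
  have hfk : f.coeff F.order ≠ 0 := fun h => by simp [h] at hlead
  have hgk : g.coeff (-F.order) ≠ 0 := fun h => by simp [h] at hlead
  have hgord : g.order ≤ -F.order := order_le_of_coeff_ne_zero hgk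
  refine ⟨F.order, Finset.mem_Icc.mpr ⟨order_le_of_coeff_ne_zero hfk, by omega⟩,
    fun j hj => ?_, ?_⟩
  · exact Ideal.Quotient.eq_zero_iff_mem.mp (coeff_eq_zero_of_lt_order hj)
  · rw [← Ideal.Quotient.eq_zero_iff_mem, map_sub, map_one, map_mul, hlead, sub_self]

theorem exists_orthogonalIdempotents_of_mul_eq_one {f g : LaurentSeries R} (hfg : f * g = 1) :
    ∃ e : ℤ → R, OrthogonalIdempotents e ∧
      support e ⊆ Finset.Icc f.order (-g.order) ∧ ∑ k ∈ Finset.Icc f.order (-g.order), e k = 1 ∧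
      ∀ k, (∀ j < k, IsNilpotent (e k * f.coeff j)) ∧ ∃ b, f.coeff k * b * e k = e k := by
  set S : ℤ → Set (PrimeSpectrum R) := fun k =>
    PrimeSpectrum.zeroLocus (insert (1 - f.coeff k * g.coeff (-k)) (f.coeff '' Set.Iio k))
  have mem_S : ∀ p k, p ∈ S k ↔
      1 - f.coeff k * g.coeff (-k) ∈ p.asIdeal ∧ ∀ j < k, f.coeff j ∈ p.asIdeal := by
    intro p k
    simp [S, PrimeSpectrum.mem_zeroLocus, Set.subset_def]
  have le_of_mem : ∀ p i j, p ∈ S i → p ∈ S j → i ≤ j := fun p i j hi hj => by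
    by_contra! hji
    exact Ideal.notMem_of_one_sub_mul_mem p.isPrime.ne_top ((mem_S p j).mp hj).1
      (((mem_S p i).mp hi).2 j hji)
  obtain ⟨e, he, hSe, hsupp, hsum⟩ := PrimeSpectrum.exists_orthogonalIdempotents_basicOpen_eq
    (Finset.Icc f.order (-g.order)) (S := S) (fun k => PrimeSpectrum.isClosed_zeroLocus _)
    (fun i j hij => Set.disjoint_left.mpr fun p hi hj =>
      hij (le_antisymm (le_of_mem p i j hi hj) (le_of_mem p j i hj hi)))
    (fun p => by
      obtain ⟨k, hk, hlow, hunit⟩ :=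
        exists_mem_Icc_forall_lt_coeff_mem_of_mul_eq_one hfg p.asIdeal
      exact ⟨k, hk, (mem_S p k).mpr ⟨hunit, hlow⟩⟩)
  refine ⟨e, he, hsupp, hsum, fun k => ⟨fun j hj => ?_, ?_⟩⟩
  · refine PrimeSpectrum.isNilpotent_mul_of_basicOpen_subset_zeroLocus fun p hp => ?_
    rw [hSe] at hp
    simpa [PrimeSpectrum.mem_zeroLocus] using ((mem_S p k).mp hp).2 j hj
  · refine PrimeSpectrum.exists_mul_mul_eq_of_basicOpen_le (he.idem k) fun p hp => ?_
    rw [← SetLike.mem_coe, hSe] at hp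
    exact Ideal.notMem_of_one_sub_mul_mem p.isPrime.ne_top ((mem_S p k).mp hp).1

end LaurentSeries

/-- A formal Laurent series `f` over a commutative ring `R` is a unit if and only if
there is a finite system of orthogonal idempotents `e k` summing to `1` such that on
each piece `e k` the coefficients of `f` below degree `k` are nilpotent and the
coefficient in degree `k` is a unit of the ring `e k • R`. -/
theorem laurentSeries_isUnit_iff {R : Type*} [CommRing R] (f : LaurentSeries R) :
    IsUnit f ↔
      ∃ e : ℤ → R, (Function.support e).Finite ∧
        (∀ i j, i ≠ j → e i * e j = 0) ∧ (∀ k, e k * e k = e k) ∧ (∑ᶠ k, e k = 1) ∧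
        ∀ k : ℤ, (∀ j < k, IsNilpotent (e k * f.coeff j)) ∧
          ∃ b : R, f.coeff k * b * e k = e k := by
  constructor
  · intro hf
    obtain ⟨g, hfg⟩ := hf.exists_right_inv
    obtain ⟨e, he, hsupp, hsum, hcoeff⟩ :=
      LaurentSeries.exists_orthogonalIdempotents_of_mul_eq_one hfg
    exact ⟨e, (Finset.finite_toSet _).subset hsupp, fun i j hij => he.ortho hij,
      fun k => (he.idem k).eq, by rwa [finsum_eq_sum_of_support_subset e hsupp], hcoeff⟩
  · rintro ⟨e, hfin, -, hidem, hsum, hcoeff⟩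
    have hdvd : ∀ k, f ∣ C (e k) := fun k =>
      LaurentSeries.dvd_C_of_isIdempotentElem (hidem k) (hcoeff k).1 (hcoeff k).2
    refine isUnit_of_dvd_one ?_
    rw [← map_one C, ← hsum, finsum_eq_sum e hfin, map_sum]
    exact Finset.dvd_sum fun k _ => hdvd k
end

section
/- Let R be a commutative ring, k ∈ ℤ, and f = Σ_{j∈ℤ} a_j X^j a formal Laurent series over R such that a_j is nilpotent for all j < k and a_k is a unit of R. Then there is a unique pair (u, g) where u is an invertible formal power series in R⟦X⟧ and g = Σ_{j≤0} b_j X^j is a Laurent series supported in degrees ≤ 0 with b_0 = 1, b_j nilpotent for all j < 0, and b_j = 0 for all but finitely many j, such that f = X^k · u · g in R((X)). -/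
/-!
Multiplying by `X^(-k)` reduces to `k = 0`. Write `x = a + b` with `a` its power-series part,
a unit of `R⟦X⟧`, and `b` its principal part, whose finitely many coefficients lie in a nilpotent
ideal `J`. A factorisation `x = u * g` with `g` of nonnegative part `1` amounts to `w = u⁻¹`
solving `M w = 1` for the `R`-linear map `M w = nonnegPart (w * x)`. Now `M = a * (1 + L)` where
`L w = a⁻¹ * nonnegPart (w * b)` pushes coefficients from `J ^ m` into `J ^ (m + 1)`, so `L` is
nilpotent and `M` is bijective: `w = M⁻¹ 1` gives existence and uniqueness at once.
-/

section HahnSeries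

variable {Γ R : Type*} [PartialOrder Γ] [CommSemiring R]

theorem HahnSeries.exists_isNilpotent_ideal_coeff_mem {x : HahnSeries Γ R}
    (hfin : x.support.Finite) (hx : ∀ g, IsNilpotent (x.coeff g)) :
    ∃ J : Ideal R, IsNilpotent J ∧ ∀ g, x.coeff g ∈ J := by
  refine ⟨Ideal.span (x.coeff '' x.support), ?_, fun g => ?_⟩
  · refine (Ideal.FG.isNilpotent_iff_le_nilradical
      ⟨(hfin.image x.coeff).toFinset, by rw [Set.Finite.coe_toFinset]⟩).2 ?_
    exact Ideal.span_le.2 fun _ ⟨g, _, hg⟩ => hg ▸ hx g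
  · by_cases hg : x.coeff g = 0
    · exact hg ▸ Ideal.zero_mem _
    · exact Ideal.subset_span ⟨g, hg, rfl⟩

variable [AddCommMonoid Γ] [IsOrderedCancelAddMonoid Γ]

theorem HahnSeries.coeff_mul_mem_mul {I J : Ideal R} {x y : HahnSeries Γ R}
    (hx : ∀ g, x.coeff g ∈ I) (hy : ∀ g, y.coeff g ∈ J) (g : Γ) :
    (x * y).coeff g ∈ I * J := by
  rw [HahnSeries.coeff_mul]
  exact Ideal.sum_mem _ fun ij _ => Ideal.mul_mem_mul (hx ij.1) (hy ij.2)

theorem HahnSeries.coeff_mul_mem_of_right {J : Ideal R} (x : HahnSeries Γ R)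
    {y : HahnSeries Γ R} (hy : ∀ g, y.coeff g ∈ J) (g : Γ) : (x * y).coeff g ∈ J := by
  rw [HahnSeries.coeff_mul]
  exact Ideal.sum_mem _ fun ij _ => Ideal.mul_mem_left _ _ (hy ij.2)

end HahnSeries

theorem PowerSeries.coeff_mul_mem_of_right {R : Type*} [CommSemiring R] {I : Ideal R}
    (p : PowerSeries R) {q : PowerSeries R} (hq : ∀ n, coeff n q ∈ I) (n : ℕ) :
    coeff n (p * q) ∈ I := by
  rw [PowerSeries.coeff_mul]
  exact Ideal.sum_mem _ fun ij _ => Ideal.mul_mem_left _ _ (hq ij.2)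

namespace LaurentSeries

open PowerSeries HahnSeries

variable {R : Type*} [CommRing R]

theorem support_finite_of_coeff_eq_zero {x : LaurentSeries R} (N : ℤ)
    (hx : ∀ j, N < j → x.coeff j = 0) : x.support.Finite := by
  rcases eq_or_ne x 0 with rfl | -
  · simp
  · exact (Set.finite_Icc x.order N).subset fun j hj =>
      ⟨order_le_of_coeff_ne_zero hj, not_lt.1 fun hNj => hj (hx j hNj)⟩

theorem coeff_coe_mem {I : Ideal R} {p : PowerSeries R} (hp : ∀ n, coeff n p ∈ I) (j : ℤ) :
    (p : LaurentSeries R).coeff j ∈ I := by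
  rw [coeff_coe]
  split_ifs
  · exact I.zero_mem
  · exact hp _

noncomputable def nonnegPart : LaurentSeries R →ₗ[R] PowerSeries R where
  toFun x := PowerSeries.mk fun n => x.coeff n
  map_add' x y := by ext; simp
  map_smul' r x := by ext; simp

@[simp]
theorem coeff_nonnegPart (x : LaurentSeries R) (n : ℕ) : coeff n (nonnegPart x) = x.coeff n :=
  coeff_mk n fun n : ℕ => x.coeff n

@[simp]
theorem nonnegPart_coe (p : PowerSeries R) : nonnegPart (p : LaurentSeries R) = p := by
  ext n
  simp [coeff_coe_powerSeries]

theorem nonnegPart_eq_one_iff {x : LaurentSeries R} :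
    nonnegPart x = 1 ↔ (∀ j, 0 < j → x.coeff j = 0) ∧ x.coeff 0 = 1 := by
  rw [PowerSeries.ext_iff]
  simp only [coeff_nonnegPart, PowerSeries.coeff_one]
  constructor
  · intro h
    refine ⟨fun j hj => ?_, by simpa using h 0⟩
    lift j to ℕ using hj.le
    simpa [Nat.pos_iff_ne_zero.1 (by exact_mod_cast hj)] using h j
  · rintro ⟨hpos, h0⟩ (_ | n)
    · simpa using h0
    · simpa using hpos _ (by positivity)

noncomputable def principalPart (x : LaurentSeries R) : LaurentSeries R := x - nonnegPart x

theorem coeff_principalPart (x : LaurentSeries R) (j : ℤ) :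
    (principalPart x).coeff j = if j < 0 then x.coeff j else 0 := by
  rw [principalPart, coeff_sub, coeff_coe]
  split_ifs with hj
  · rw [sub_zero]
  · rw [coeff_nonnegPart, Int.natCast_natAbs, abs_of_nonneg (not_lt.1 hj), sub_self]

theorem coe_nonnegPart_add_principalPart (x : LaurentSeries R) :
    (nonnegPart x : LaurentSeries R) + principalPart x = x :=
  add_sub_cancel _ _

theorem principalPart_support_finite (x : LaurentSeries R) : (principalPart x).support.Finite :=
  support_finite_of_coeff_eq_zero (-1) fun j hj => by
    rw [coeff_principalPart, if_neg (by omega)]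

theorem isNilpotent_coeff_principalPart {x : LaurentSeries R}
    (hx : ∀ j < 0, IsNilpotent (x.coeff j)) (j : ℤ) :
    IsNilpotent ((principalPart x).coeff j) := by
  rw [coeff_principalPart]
  split_ifs with hj
  exacts [hx j hj, IsNilpotent.zero]

noncomputable def nonnegPartMul (x : LaurentSeries R) : Module.End R (PowerSeries R) where
  toFun p := nonnegPart ((p : LaurentSeries R) * x)
  map_add' p q := by rw [coe_add, add_mul, map_add]
  map_smul' r p := by
    rw [coe_smul, ← C_mul_eq_smul, mul_assoc, C_mul_eq_smul, map_smul, RingHom.id_apply]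

@[simp]
theorem nonnegPartMul_apply (x : LaurentSeries R) (p : PowerSeries R) :
    nonnegPartMul x p = nonnegPart ((p : LaurentSeries R) * x) :=
  rfl

theorem coeff_nonnegPartMul_mem_mul {I J : Ideal R} {p : PowerSeries R} {x : LaurentSeries R}
    (hp : ∀ n, coeff n p ∈ I) (hx : ∀ j, x.coeff j ∈ J) (n : ℕ) :
    coeff n (nonnegPartMul x p) ∈ I * J := by
  rw [nonnegPartMul_apply, coeff_nonnegPart]
  exact HahnSeries.coeff_mul_mem_mul (coeff_coe_mem hp) hx n

theorem nonnegPartMul_apply_eq_add (x : LaurentSeries R) (p : PowerSeries R) :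
    nonnegPartMul x p = p * nonnegPart x + nonnegPartMul (principalPart x) p := by
  conv_lhs => rw [nonnegPartMul_apply, ← coe_nonnegPart_add_principalPart x]
  rw [mul_add, map_add, ← coe_mul, nonnegPart_coe, nonnegPartMul_apply]

theorem isUnit_nonnegPartMul {x : LaurentSeries R} (h0 : IsUnit (x.coeff 0))
    (hneg : ∀ j < 0, IsNilpotent (x.coeff j)) : IsUnit (nonnegPartMul x) := by
  have ha : IsUnit (nonnegPart x) := by
    rwa [isUnit_iff_constantCoeff, ← coeff_zero_eq_constantCoeff_apply, coeff_nonnegPart]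
  obtain ⟨J, ⟨n, hJ⟩, hbJ⟩ := exists_isNilpotent_ideal_coeff_mem
    (principalPart_support_finite x) (isNilpotent_coeff_principalPart hneg)
  set L := Algebra.lmul R (PowerSeries R) ↑ha.unit⁻¹ * nonnegPartMul (principalPart x)
  have hL : ∀ m p k, coeff k ((L ^ m) p) ∈ J ^ m := by
    intro m
    induction m with
    | zero => simp
    | succ m ih =>
      intro p k
      rw [pow_succ' L, Module.End.mul_apply, pow_succ]
      exact PowerSeries.coeff_mul_mem_of_right _ (coeff_nonnegPartMul_mem_mul (ih p) hbJ) k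
  have hLn : L ^ n = 0 := by
    ext p k
    simpa [hJ] using hL n p k
  have hdecomp : nonnegPartMul x = Algebra.lmul R (PowerSeries R) (nonnegPart x) * (1 + L) := by
    ext1 p
    simp [L, nonnegPartMul_apply_eq_add x p, mul_add, ← mul_assoc, mul_comm p]
  rw [hdecomp]
  exact (ha.map _).mul (IsNilpotent.isUnit_one_add ⟨n, hLn⟩)

theorem isNilpotent_coeff_mul_principalPart {x : LaurentSeries R}
    (hx : ∀ j < 0, IsNilpotent (x.coeff j)) (y : LaurentSeries R) (j : ℤ) :
    IsNilpotent ((y * principalPart x).coeff j) := by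
  rw [← mem_nilradical]
  exact HahnSeries.coeff_mul_mem_of_right _
    (fun i => mem_nilradical.2 (isNilpotent_coeff_principalPart hx i)) j

theorem isNilpotent_coeff_coe_mul {x : LaurentSeries R} (hx : ∀ j < 0, IsNilpotent (x.coeff j))
    (p : PowerSeries R) {j : ℤ} (hj : j < 0) :
    IsNilpotent (((p : LaurentSeries R) * x).coeff j) := by
  rw [← coe_nonnegPart_add_principalPart x, mul_add, ← coe_mul, coeff_add, coeff_coe, if_pos hj,
    zero_add]
  exact isNilpotent_coeff_mul_principalPart hx _ j

theorem isUnit_of_nonnegPartMul_eq_one {x : LaurentSeries R}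
    (hx : ∀ j < 0, IsNilpotent (x.coeff j)) {p : PowerSeries R} (hp : nonnegPartMul x p = 1) :
    IsUnit p := by
  have h1 : coeff 0 (p * nonnegPart x) = 1 - coeff 0 (nonnegPartMul (principalPart x) p) := by
    rw [eq_sub_iff_add_eq, ← map_add, ← nonnegPartMul_apply_eq_add, hp, PowerSeries.coeff_one,
      if_pos rfl]
  rw [isUnit_iff_constantCoeff]
  refine isUnit_of_mul_isUnit_left (y := constantCoeff (nonnegPart x)) ?_
  rw [← map_mul, ← coeff_zero_eq_constantCoeff_apply, h1, nonnegPartMul_apply, coeff_nonnegPart]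
  exact (isNilpotent_coeff_mul_principalPart hx _ 0).isUnit_one_sub

theorem existsUnique_factorization {x : LaurentSeries R} (h0 : IsUnit (x.coeff 0))
    (hneg : ∀ j < 0, IsNilpotent (x.coeff j)) :
    ∃! p : PowerSeries R × LaurentSeries R, IsUnit p.1 ∧ nonnegPart p.2 = 1 ∧
      (∀ j < 0, IsNilpotent (p.2.coeff j)) ∧ x = p.1 * p.2 := by
  have hinv (U : (PowerSeries R)ˣ) :
      ((↑U⁻¹ : PowerSeries R) : LaurentSeries R) * (U : PowerSeries R) = 1 := by
    rw [← coe_mul, U.inv_mul, coe_one]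
  obtain ⟨w, hw, hw_unique⟩ :=
    ((Module.End.isUnit_iff _).1 (isUnit_nonnegPartMul h0 hneg)).existsUnique 1
  obtain ⟨W, rfl⟩ := isUnit_of_nonnegPartMul_eq_one hneg hw
  refine ⟨(↑W⁻¹, W * x),
    ⟨W⁻¹.isUnit, hw, fun j hj => isNilpotent_coeff_coe_mul hneg _ hj, ?_⟩, ?_⟩
  · rw [← mul_assoc, hinv, one_mul]
  · rintro ⟨_, g⟩ ⟨⟨U, rfl⟩, hg, -, rfl⟩
    obtain rfl : U⁻¹ = W := Units.ext <| hw_unique _ <| by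
      dsimp only
      rw [nonnegPartMul_apply, ← mul_assoc, hinv, one_mul, hg]
    rw [inv_inv, ← mul_assoc, hinv, one_mul]

end LaurentSeries

/-- A Laurent series which is invertible of constant degree `k` (coefficients below
degree `k` nilpotent, degree-`k` coefficient a unit) factors uniquely as
`X^k · u · g` with `u` an invertible power series and `g` a finitely supported series
in nonpositive degrees with constant term `1` and nilpotent lower coefficients. -/
theorem laurentSeries_factorisation {R : Type*} [CommRing R] (k : ℤ)
    (f : LaurentSeries R)
    (hlt : ∀ j < k, IsNilpotent (f.coeff j)) (hk : IsUnit (f.coeff k)) :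
    ∃! p : PowerSeries R × LaurentSeries R,
      IsUnit p.1 ∧
      (∀ j : ℤ, 0 < j → p.2.coeff j = 0) ∧
      p.2.coeff 0 = 1 ∧
      (∀ j : ℤ, j < 0 → IsNilpotent (p.2.coeff j)) ∧
      p.2.support.Finite ∧
      f = (HahnSeries.single k (1 : R)) * (HahnSeries.ofPowerSeries ℤ R p.1) * p.2 := by
  set h : LaurentSeries R := HahnSeries.single (-k) 1 * f with hh
  have hcoeff : ∀ j, h.coeff j = f.coeff (j + k) := fun j => by
    simpa using HahnSeries.coeff_single_mul_add (r := (1 : R)) (x := f) (a := j + k) (b := -k)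
  have hX : IsUnit (HahnSeries.single k (1 : R) : LaurentSeries R) :=
    IsUnit.of_mul_eq_one (HahnSeries.single (-k) 1) <| by
      rw [HahnSeries.single_mul_single, add_neg_cancel, mul_one, HahnSeries.single_zero_one]
  have hf : f = HahnSeries.single k 1 * h := by
    rw [hh, ← mul_assoc, HahnSeries.single_mul_single, add_neg_cancel, mul_one,
      HahnSeries.single_zero_one, one_mul]
  have hfac : ∀ (u : PowerSeries R) g,
      f = HahnSeries.single k 1 * (u : LaurentSeries R) * g ↔ h = u * g := fun u g => by
    rw [hf, mul_assoc, hX.mul_right_inj]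
  obtain ⟨⟨u, g⟩, ⟨hu, hg, hgneg, hug⟩, huniq⟩ :=
    LaurentSeries.existsUnique_factorization (x := h) (by rwa [hcoeff, zero_add])
      fun j hj => hcoeff j ▸ hlt _ (by omega)
  obtain ⟨hgpos, hg0⟩ := LaurentSeries.nonnegPart_eq_one_iff.1 hg
  refine ⟨(u, g), ⟨hu, hgpos, hg0, hgneg, LaurentSeries.support_finite_of_coeff_eq_zero 0 hgpos,
    (hfac u g).2 hug⟩, fun q ⟨hq, hqpos, hq0, hqneg, _, hfq⟩ => huniq q
    ⟨hq, LaurentSeries.nonnegPart_eq_one_iff.2 ⟨hqpos, hq0⟩, hqneg, (hfac _ _).1 hfq⟩⟩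
end

section
/- Let R be a commutative ring, d ≥ 1, and g ∈ R⟦X⟧ a power series whose coefficient in each degree j < d is nilpotent and whose coefficient in degree d is a unit. Then the image ḡ of g in the Laurent series ring R((X)) is a unit, and for every k ∈ ℤ, the coefficient of X^{−1} in ḡ^k · g′ (where g′ ∈ R⟦X⟧ is the formal derivative of g, viewed in R((X))) equals d·1 if k = −1 and equals 0 if k ≠ −1. -/
/-!
For `k ≥ 0` the series `g^k g'` has no negative powers. For a Laurent series `w = X^{-N} p` and
`j ≥ 0`, the residue of `w^j w'` is `-N [X^{(j+1)N}] p^{j+1} + [X^{(j+1)N-1}] p^j p'`; over `ℚ` this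
vanishes because `w^j w' = (w^{j+1})' / (j+1)`, and over any ring because it is an identity between
integer polynomials in the coefficients of `p`. Applied to `w = g⁻¹` this gives `k ≤ -2`.

For `k = -1`, the residue of the logarithmic derivative `u⁻¹ u'` is additive in the unit `u`.
Splitting off the nilpotent low-order part, `g = X^d t (1 + h)` in `R((X))` with `t` a unit power
series and `h` nilpotent; the three factors contribute `d`, `0` (no negative powers) and `0`
(expand `(1 + h)⁻¹` as a finite geometric series and use the vanishing above).
-/

namespace PowerSeries

theorem map_derivative {R S : Type*} [CommSemiring R] [CommSemiring S] (f : R →+* S)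
    (p : R⟦X⟧) : map f (d⁄dX R p) = d⁄dX S (map f p) := by
  ext n
  simp [coeff_derivative]

variable {R : Type*} [CommRing R]

theorem natCast_mul_coeff_pow_succ_of_isAddTorsionFree [IsAddTorsionFree R] (p : R⟦X⟧)
    {j n N : ℕ} (hn : n + 1 = (j + 1) * N) :
    (N : R) * coeff (n + 1) (p ^ (j + 1)) = coeff n (p ^ j * d⁄dX R p) := by
  apply IsAddTorsionFree.nsmul_right_injective (Nat.succ_ne_zero j)
  have hpow := congrArg (coeff n) ((d⁄dX R).leibniz_pow (a := p) (j + 1))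
  rw [coeff_derivative, Nat.add_sub_cancel, smul_eq_mul, map_nsmul] at hpow
  have hcast : ((n + 1 : ℕ) : R) = ((j + 1) * N : ℕ) := congrArg _ hn
  push_cast at hcast
  simp only [nsmul_eq_mul, Nat.cast_succ] at hpow ⊢
  linear_combination hpow - coeff (n + 1) (p ^ (j + 1)) * hcast

/-- Specialize the generic power series over the torsion-free ring `MvPolynomial ℕ ℤ`. -/
theorem natCast_mul_coeff_pow_succ (p : R⟦X⟧) {j n N : ℕ} (hn : n + 1 = (j + 1) * N) :
    (N : R) * coeff (n + 1) (p ^ (j + 1)) = coeff n (p ^ j * d⁄dX R p) := by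
  let ψ : MvPolynomial ℕ ℤ →+* R := MvPolynomial.eval₂Hom (Int.castRingHom R) (coeff · p)
  let P : (MvPolynomial ℕ ℤ)⟦X⟧ := mk MvPolynomial.X
  have hP : map ψ P = p := by ext n; simp [P, ψ]
  have := congrArg ψ (natCast_mul_coeff_pow_succ_of_isAddTorsionFree P hn)
  simpa only [map_mul, map_natCast, ← coeff_map, map_pow, map_derivative, hP] using this

theorem exists_isNilpotent_add_X_pow_mul_isUnit {d : ℕ} {g : R⟦X⟧}
    (hlt : ∀ j < d, IsNilpotent (coeff j g)) (hdu : IsUnit (coeff d g)) :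
    ∃ ε t : R⟦X⟧, IsNilpotent ε ∧ IsUnit t ∧ g = ε + X ^ d * t := by
  have hε : IsNilpotent (trunc d g) := by
    refine Polynomial.isNilpotent_iff.mpr fun i => ?_
    rw [coeff_trunc]
    split_ifs with hi
    exacts [hlt i hi, IsNilpotent.zero]
  have hcoeff (m : ℕ) : coeff m (g - (trunc d g : R⟦X⟧)) = if m < d then 0 else coeff m g := by
    rw [map_sub, Polynomial.coeff_coe, coeff_trunc]
    split_ifs <;> simp
  obtain ⟨t, ht⟩ : X ^ d ∣ g - (trunc d g : R⟦X⟧) :=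
    X_pow_dvd_iff.mpr fun m hm => by rw [hcoeff, if_pos hm]
  refine ⟨trunc d g, t, hε.map (Polynomial.coeToPowerSeries.ringHom (R := R)), ?_,
    by rw [← ht, add_sub_cancel]⟩
  rw [isUnit_iff_constantCoeff, ← coeff_zero_eq_constantCoeff_apply, ← coeff_X_pow_mul _ d,
    zero_add, ← ht, hcoeff, if_neg (lt_irrefl d)]
  exact hdu

end PowerSeries

open HahnSeries PowerSeries

namespace LaurentSeries

variable {R : Type*} [CommRing R]

theorem derivative_coeff (f : R⸨X⸩) (n : ℤ) :
    (derivative R f).coeff n = ((n + 1 : ℤ) : R) * f.coeff (n + 1) := by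
  simp [zsmul_eq_mul]

theorem coeff_single_mul (e n : ℤ) (r : R) (x : R⸨X⸩) :
    (single e r * x).coeff n = r * x.coeff (n - e) := by
  rw [← sub_add_cancel n e, coeff_single_mul_add, sub_add_cancel]

theorem derivative_single_mul_coe (e : ℤ) (p : R⟦X⟧) :
    derivative R (single e 1 * (p : R⸨X⸩)) =
      single (e - 1) (e : R) * (p : R⸨X⸩) + single e 1 * (d⁄dX R p : R⸨X⸩) := by
  ext n
  rw [coeff_add, derivative_coeff, coeff_single_mul, coeff_single_mul, coeff_single_mul,
    one_mul, one_mul, coeff_coe, coeff_coe, coeff_coe,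
    show n + 1 - e = n - e + 1 by ring, show n - (e - 1) = n - e + 1 by ring]
  rcases lt_trichotomy (n - e) (-1) with hlt | heq | hgt
  · simp [show n - e + 1 < 0 by omega, show n - e < 0 by omega]
  · simp [heq, show n + 1 = e by omega]
  · obtain ⟨m, hm⟩ := Int.eq_ofNat_of_zero_le (by omega : 0 ≤ n - e)
    rw [if_neg (by omega), if_neg (by omega), hm, coeff_derivative,
      show ((m : ℤ) + 1).natAbs = m + 1 by omega, Int.natAbs_natCast,
      show n + 1 = e + (m + 1) by omega]
    push_cast
    ring

theorem derivative_coe (p : R⟦X⟧) : derivative R (p : R⸨X⸩) = (d⁄dX R p : R⸨X⸩) := by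
  simpa using derivative_single_mul_coe 0 p

theorem single_mul_coe_mul_single_mul_coe (a b : ℤ) (r s : R) (p q : R⟦X⟧) :
    (single a r * (p : R⸨X⸩)) * (single b s * (q : R⸨X⸩)) =
      single (a + b) (r * s) * ((p * q : R⟦X⟧) : R⸨X⸩) := by
  rw [mul_mul_mul_comm, single_mul_single, ← map_mul]

theorem derivative_mul (x y : R⸨X⸩) :
    derivative R (x * y) = x * derivative R y + y * derivative R x := by
  rw [← single_order_mul_powerSeriesPart x, ← single_order_mul_powerSeriesPart y]
  generalize x.order = a, x.powerSeriesPart = p, y.order = b, y.powerSeriesPart = q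
  simp only [single_mul_coe_mul_single_mul_coe, one_mul, derivative_single_mul_coe,
    Derivation.leibniz, smul_eq_mul, map_add, mul_add]
  rw [show a + (b - 1) = a + b - 1 by ring, show b + (a - 1) = a + b - 1 by ring, add_comm b a,
    mul_comm q p, Int.cast_add, single_add]
  ring

variable (R) in
noncomputable def derivation : Derivation R R⸨X⸩ R⸨X⸩ where
  toFun := derivative R
  map_add' := map_add _
  map_smul' r f := by
    rw [RingHom.id_apply, Algebra.smul_def, HahnSeries.algebraMap_apply', derivative_mul,
      derivative_coe, Derivation.map_algebraMap, map_zero, mul_zero, add_zero,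
      PowerSeries.algebraMap_eq, ofPowerSeries_C, C_mul_eq_smul]
  map_one_eq_zero' := by
    change derivative R 1 = 0
    rw [← map_one (ofPowerSeries ℤ R), derivative_coe, Derivation.map_one_eq_zero, map_zero]
  leibniz' x y := derivative_mul x y

theorem derivation_apply (f : R⸨X⸩) : derivation R f = derivative R f := rfl

theorem coeff_coe_of_neg (p : R⟦X⟧) {n : ℤ} (hn : n < 0) : (p : R⸨X⸩).coeff n = 0 := by
  rw [coeff_coe, if_pos hn]

theorem coeff_neg_one_pow_mul_derivation_self (w : R⸨X⸩) (j : ℕ) :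
    (w ^ j * derivation R w).coeff (-1) = 0 := by
  rw [← single_order_mul_powerSeriesPart w]
  generalize w.order = e, w.powerSeriesPart = p
  rw [derivation_apply, derivative_single_mul_coe, mul_pow, single_pow, one_pow, ← map_pow,
    mul_add, single_mul_coe_mul_single_mul_coe, single_mul_coe_mul_single_mul_coe, coeff_add,
    coeff_single_mul, coeff_single_mul, one_mul, one_mul, ← pow_succ, nsmul_eq_mul]
  rcases lt_trichotomy e 0 with he | rfl | he
  · obtain ⟨N, rfl⟩ : ∃ N : ℕ, e = -N := ⟨e.natAbs, by omega⟩
    obtain ⟨n, hn⟩ : ∃ n : ℕ, n + 1 = (j + 1) * N :=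
      ⟨(j + 1) * N - 1, by have : 0 < (j + 1) * N := Nat.mul_pos j.succ_pos (by omega); omega⟩
    have hn_cast : (n : ℤ) + 1 = (j + 1) * N := by exact_mod_cast hn
    rw [show -1 - ((j : ℤ) * -N + (-N - 1)) = ((n + 1 : ℕ) : ℤ) by push_cast; linarith,
      show -1 - ((j : ℤ) * -N + -N) = (n : ℤ) by linarith, coeff_coe_powerSeries,
      coeff_coe_powerSeries, ← natCast_mul_coeff_pow_succ p hn]
    push_cast
    ring
  · rw [Int.cast_zero, zero_mul, zero_add, one_mul, coeff_coe_of_neg _ (by simp)]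
  · rw [coeff_coe_of_neg (p ^ (j + 1)) (by nlinarith),
      coeff_coe_of_neg (p ^ j * d⁄dX R p) (by nlinarith), mul_zero, mul_zero, add_zero]

theorem coeff_neg_one_zpow_mul_derivation (v : R⸨X⸩ˣ) {k : ℤ} (hk : k ≠ -1) :
    ((↑(v ^ k) : R⸨X⸩) * derivation R v).coeff (-1) = 0 := by
  match k, hk with
  | (j : ℕ), _ =>
    rw [zpow_natCast, Units.val_pow_eq_pow_val]
    exact coeff_neg_one_pow_mul_derivation_self _ j
  | .negSucc (j + 1), _ =>
    have hinv : (↑v⁻¹ : R⸨X⸩) * v = 1 := v.inv_mul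
    have hv : derivation R ↑v = -(↑v ^ 2 * derivation R ↑v⁻¹) := by
      rw [(derivation R).leibniz_of_mul_eq_one v.mul_inv, smul_eq_mul, neg_mul]
    have hpow : ↑(v ^ Int.negSucc (j + 1)) * derivation R ↑v =
        -((↑v⁻¹ : R⸨X⸩) ^ j * derivation R ↑v⁻¹) := by
      rw [zpow_negSucc, ← inv_pow, Units.val_pow_eq_pow_val, hv]
      linear_combination (-(↑v⁻¹ ^ j * derivation R ↑v⁻¹) * (↑v⁻¹ * ↑v + 1)) * hinv
    rw [hpow, coeff_neg, coeff_neg_one_pow_mul_derivation_self, neg_zero]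

noncomputable def residueLogDeriv (u : R⸨X⸩ˣ) : R := (↑u⁻¹ * derivation R u).coeff (-1)

theorem residueLogDeriv_mul (a b : R⸨X⸩ˣ) :
    residueLogDeriv (a * b) = residueLogDeriv a + residueLogDeriv b := by
  rw [residueLogDeriv, residueLogDeriv, residueLogDeriv, ← coeff_add]
  congr 1
  simp only [mul_inv, Units.val_mul, Derivation.leibniz, smul_eq_mul]
  linear_combination (↑b⁻¹ * derivation R ↑b) * a.inv_mul + (↑a⁻¹ * derivation R ↑a) * b.inv_mul

theorem residueLogDeriv_one : residueLogDeriv (1 : R⸨X⸩ˣ) = 0 := by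
  simp [residueLogDeriv]

theorem residueLogDeriv_pow (u : R⸨X⸩ˣ) (n : ℕ) :
    residueLogDeriv (u ^ n) = n * residueLogDeriv u := by
  induction n with
  | zero => simp [residueLogDeriv_one]
  | succ n ih => rw [pow_succ, residueLogDeriv_mul, ih]; push_cast; ring

variable (R) in
noncomputable def unitX : R⸨X⸩ˣ where
  val := single 1 1
  inv := single (-1) 1
  val_inv := by rw [single_mul_single, add_neg_cancel, mul_one, single_zero_one]
  inv_val := by rw [single_mul_single, neg_add_cancel, mul_one, single_zero_one]

theorem residueLogDeriv_unitX : residueLogDeriv (unitX R) = 1 := by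
  simp [residueLogDeriv, unitX, derivation_apply]

theorem residueLogDeriv_map_ofPowerSeries (u : R⟦X⟧ˣ) :
    residueLogDeriv (Units.map (ofPowerSeries ℤ R : R⟦X⟧ →* R⸨X⸩) u) = 0 := by
  rw [residueLogDeriv, ← map_inv, Units.coe_map, Units.coe_map, MonoidHom.coe_coe,
    derivation_apply, derivative_coe, ← map_mul, coeff_coe_of_neg _ (by norm_num)]

theorem residueLogDeriv_eq_zero_of_isNilpotent_sub_one (u : R⸨X⸩ˣ)
    (hu : IsNilpotent ((u : R⸨X⸩) - 1)) : residueLogDeriv u = 0 := by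
  obtain ⟨n, hn⟩ := hu
  set h := (u : R⸨X⸩) - 1
  have hinv : (↑u⁻¹ : R⸨X⸩) = ∑ i ∈ Finset.range n, (-h) ^ i := by
    apply Units.inv_eq_of_mul_eq_one_right
    rw [show (u : R⸨X⸩) = 1 - -h by simp [h], mul_neg_geom_sum, neg_pow, hn, mul_zero, sub_zero]
  have hD : derivation R ↑u = -derivation R (-h) := by
    simp [h, map_sub, Derivation.map_one_eq_zero]
  rw [residueLogDeriv, hinv, hD, Finset.sum_mul, coeff_sum]
  refine Finset.sum_eq_zero fun i _ => ?_
  rw [mul_neg, coeff_neg, coeff_neg_one_pow_mul_derivation_self, neg_zero]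

theorem residueLogDeriv_of_eq_add_isNilpotent {u w : R⸨X⸩ˣ} {ε : R⸨X⸩} (hε : IsNilpotent ε)
    (hw : (w : R⸨X⸩) = u + ε) : residueLogDeriv w = residueLogDeriv u := by
  have hnil : IsNilpotent ((↑(u⁻¹ * w) : R⸨X⸩) - 1) := by
    rw [Units.val_mul, hw, mul_add, Units.inv_mul, add_sub_cancel_left]
    exact (Commute.all _ _).isNilpotent_mul_left hε
  calc residueLogDeriv w = residueLogDeriv (u * (u⁻¹ * w)) := by rw [mul_inv_cancel_left]
    _ = residueLogDeriv u := by
      rw [residueLogDeriv_mul, residueLogDeriv_eq_zero_of_isNilpotent_sub_one _ hnil, add_zero]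

end LaurentSeries

open LaurentSeries in
theorem residue_of_weierstrass_series_general {R : Type*} [CommRing R] (d : ℕ)
    (g : PowerSeries R)
    (hlt : ∀ j < d, IsNilpotent (PowerSeries.coeff j g))
    (hdu : IsUnit (PowerSeries.coeff d g)) :
    IsUnit (HahnSeries.ofPowerSeries ℤ R g) ∧
    ∀ v : (LaurentSeries R)ˣ, (v : LaurentSeries R) = HahnSeries.ofPowerSeries ℤ R g →
      ∀ k : ℤ,
        (((v ^ k : (LaurentSeries R)ˣ) : LaurentSeries R) *
            HahnSeries.ofPowerSeries ℤ R (PowerSeries.derivative R g)).coeff (-1) =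
          if k = -1 then (d : R) else 0 := by
  obtain ⟨ε, t, hε, ht, rfl⟩ := PowerSeries.exists_isNilpotent_add_X_pow_mul_isUnit hlt hdu
  let u : R⸨X⸩ˣ := unitX R ^ d * Units.map (ofPowerSeries ℤ R : R⟦X⟧ →* R⸨X⸩) ht.unit
  have hg : ofPowerSeries ℤ R (ε + X ^ d * t) = ↑u + ofPowerSeries ℤ R ε := by
    simp [u, unitX, add_comm]
  refine ⟨hg ▸ (hε.map _).isUnit_add_left_of_commute u.isUnit (.all _ _), fun v hv k => ?_⟩
  rw [← LaurentSeries.derivative_coe, ← derivation_apply, ← hv]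
  split_ifs with hk
  · rw [hk, zpow_neg_one, ← residueLogDeriv,
      residueLogDeriv_of_eq_add_isNilpotent (hε.map _) (hv.trans hg), residueLogDeriv_mul,
      residueLogDeriv_pow, residueLogDeriv_unitX, residueLogDeriv_map_ofPowerSeries, mul_one,
      add_zero]
  · exact coeff_neg_one_zpow_mul_derivation v hk

/-- If `g` is a Weierstrass series of degree `d ≥ 1`, then `g` becomes a unit in the
Laurent series ring, and the residue (coefficient of `X⁻¹`) of `g^k · g′` is `d` when
`k = -1` and `0` otherwise. -/
theorem residue_of_weierstrass_series {R : Type*} [CommRing R] (d : ℕ) (hd : 1 ≤ d)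
    (g : PowerSeries R)
    (hlt : ∀ j < d, IsNilpotent (PowerSeries.coeff j g))
    (hdu : IsUnit (PowerSeries.coeff d g)) :
    IsUnit (HahnSeries.ofPowerSeries ℤ R g) ∧
    ∀ v : (LaurentSeries R)ˣ, (v : LaurentSeries R) = HahnSeries.ofPowerSeries ℤ R g →
      ∀ k : ℤ,
        (((v ^ k : (LaurentSeries R)ˣ) : LaurentSeries R) *
            HahnSeries.ofPowerSeries ℤ R (PowerSeries.derivative R g)).coeff (-1) =
          if k = -1 then (d : R) else 0 :=
  residue_of_weierstrass_series_general d g hlt hdu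
end

section
/- Let R be a commutative ring, n ∈ ℕ, and let a, a′ : Fin(n+1) → R be two tuples each of which generates the unit ideal of R (i.e. there exist b, b′ with Σ_i b_i a_i = 1 and Σ_i b′_i a′_i = 1). Then there exists a unit u ∈ R^× with u·a′_j = a_j for all j if and only if a_i·a′_j = a_j·a′_i for all i, j. -/
/-! If the cross products `aᵢ a'ⱼ - aⱼ a'ᵢ` vanish and `∑ bᵢ aᵢ = 1`, then `v = ∑ bᵢ a'ᵢ`
satisfies `v • a = a'`; symmetrically `w = ∑ b'ᵢ aᵢ` satisfies `w • a' = a`. Hence `wv` fixes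
the unimodular tuple `a`, which forces `wv = 1`. -/

section

variable {R ι : Type*} [CommRing R] [Fintype ι]

theorem mul_eq_of_cross_eq {a a' b : ι → R} (hb : ∑ i, b i * a i = 1)
    (hcross : ∀ i j, a i * a' j = a j * a' i) (j : ι) :
    (∑ i, b i * a' i) * a j = a' j := by
  calc (∑ i, b i * a' i) * a j = ∑ i, b i * (a i * a' j) := by
        rw [Finset.sum_mul]
        refine Finset.sum_congr rfl fun i _ => ?_
        rw [hcross i j]; ring
    _ = (∑ i, b i * a i) * a' j := by
        rw [Finset.sum_mul]
        exact Finset.sum_congr rfl fun i _ => by ring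
    _ = a' j := by rw [hb, one_mul]

theorem eq_one_of_mul_eq_self {a b : ι → R} (hb : ∑ i, b i * a i = 1) {c : R}
    (hc : ∀ j, c * a j = a j) : c = 1 := by
  calc c = c * ∑ j, b j * a j := by rw [hb, mul_one]
    _ = ∑ j, b j * (c * a j) := by
        rw [Finset.mul_sum]
        exact Finset.sum_congr rfl fun j _ => by ring
    _ = 1 := by simp only [hc, hb]

end

/-- Two systems of homogeneous coordinates (tuples generating the unit ideal) differ by a
unit if and only if all the "cross products" agree. -/
theorem homogeneous_coordinates_unique {R : Type*} [CommRing R] (n : ℕ)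
    (a a' : Fin (n + 1) → R)
    (ha : ∃ b : Fin (n + 1) → R, ∑ i, b i * a i = 1)
    (ha' : ∃ b' : Fin (n + 1) → R, ∑ i, b' i * a' i = 1) :
    (∃ u : Rˣ, ∀ j, (u : R) * a' j = a j) ↔ ∀ i j, a i * a' j = a j * a' i := by
  constructor
  · rintro ⟨u, hu⟩ i j
    rw [← hu i, ← hu j]
    ring
  · intro hcross
    obtain ⟨b, hb⟩ := ha
    obtain ⟨b', hb'⟩ := ha'
    have hv := mul_eq_of_cross_eq hb hcross
    have hw := mul_eq_of_cross_eq (a' := a) hb' fun i j => by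
      rw [mul_comm (a' i), mul_comm (a' j), hcross]
    have hwv : (∑ i, b' i * a i) * ∑ i, b i * a' i = 1 :=
      eq_one_of_mul_eq_self hb fun j => by rw [mul_assoc, hv, hw]
    exact ⟨Units.mkOfMulEqOne _ _ hwv, hw⟩
end

section
/- Let B be a commutative ring, A a B-algebra which is free as a B-module, and I an ideal of A. Then there exists an ideal I′ of B such that for every commutative ring R and every ring homomorphism y: B → R, the natural surjection R ⊗_B A → R ⊗_B (A/I) is an isomorphism if and only if y maps I′ to zero. -/
universe u v

/-!
Take `I'` to be the content of `I` with respect to a `B`-basis of `A`: the ideal generated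
by all coordinates of elements of `I`. By right exactness of `S ⊗_B -`, the surjection
`S ⊗_B A → S ⊗_B (A/I)` is injective iff `1 ⊗ a = 0` for all `a ∈ I`, and since
`S ⊗_B A` is free over `S` on the base-changed basis, `1 ⊗ a = 0` iff `y` kills every
coordinate of `a`.
-/

open TensorProduct

section lTensor

variable {B : Type*} [CommRing B] {M P : Type*} [AddCommGroup M] [Module B M]
  [AddCommGroup P] [Module B P] (S : Type*) [CommRing S] [Algebra B S]

theorem LinearMap.lTensor_bijective_iff_one_tmul_eq_zero {f : M →ₗ[B] P}
    (hf : Function.Surjective f) :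
    Function.Bijective (f.lTensor S) ↔ ∀ m, f m = 0 → (1 : S) ⊗ₜ[B] m = 0 := by
  have hexact : Function.Exact (LinearMap.ker f).subtype f := LinearMap.exact_subtype_ker_map f
  have hker :
      LinearMap.ker (f.lTensor S) = LinearMap.range ((LinearMap.ker f).subtype.lTensor S) :=
    LinearMap.exact_iff.mp (lTensor_exact S hexact hf)
  have hsubtype :
      (LinearMap.ker f).subtype.lTensor S = 0 ↔ ∀ m, f m = 0 → (1 : S) ⊗ₜ[B] m = 0 := by
    refine ⟨fun h m hm => by simpa using LinearMap.congr_fun h ((1 : S) ⊗ₜ ⟨m, hm⟩), fun h => ?_⟩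
    refine TensorProduct.ext' fun s m => ?_
    have hsm : s ⊗ₜ[B] (m : M) = s • (1 : S) ⊗ₜ[B] (m : M) := by
      rw [smul_tmul', smul_eq_mul, mul_one]
    simp only [LinearMap.lTensor_tmul, Submodule.coe_subtype, LinearMap.zero_apply, hsm,
      h m m.2, smul_zero]
  rw [← hsubtype, ← LinearMap.range_eq_bot, ← hker, LinearMap.ker_eq_bot]
  exact ⟨fun h => h.1, fun h => ⟨h, LinearMap.lTensor_surjective S hf⟩⟩

theorem Module.Basis.one_tmul_eq_zero_iff {ι : Type*} (b : Module.Basis ι B M) (m : M) :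
    (1 : S) ⊗ₜ[B] m = 0 ↔ ∀ i, algebraMap B S (b.repr m i) = 0 := by
  rw [← (b.baseChange S).repr.injective.eq_iff, map_zero, Finsupp.ext_iff]
  simp [Module.Basis.baseChange_repr_tmul, Algebra.smul_def]

end lTensor

namespace Module.Basis

variable {B : Type*} [CommRing B] {M : Type*} [AddCommGroup M] [Module B M] {ι : Type*}

noncomputable def content (b : Module.Basis ι B M) (N : Submodule B M) : Ideal B :=
  ⨆ i, N.map (b.coord i)

theorem content_le_iff (b : Module.Basis ι B M) (N : Submodule B M) (J : Ideal B) :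
    b.content N ≤ J ↔ ∀ m ∈ N, ∀ i, b.repr m i ∈ J := by
  simp only [content, iSup_le_iff, Submodule.map_le_iff_le_comap]
  exact ⟨fun h m hm i => h i hm, fun h i m hm => h m hm i⟩

end Module.Basis

/-- Openness of very flat maps, algebraic form: if `A` is a `B`-algebra which is free
as a `B`-module and `I ⊆ A` is an ideal, then there is an ideal `I′ ⊆ B` such that for
every ring `S` and every `y : B → S`, the natural surjection
`S ⊗_B A → S ⊗_B (A/I)` is an isomorphism iff `y` kills `I′`. -/
theorem very_flat_is_open (B : Type u) (A : Type v) [CommRing B] [CommRing A]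
    [Algebra B A] [Module.Free B A] (I : Ideal A) :
    ∃ I' : Ideal B, ∀ (S : Type u) [CommRing S], ∀ (y : B →+* S),
      letI : Algebra B S := y.toAlgebra
      (Function.Bijective
          (LinearMap.lTensor (R := B) S (Ideal.Quotient.mkₐ B I).toLinearMap) ↔
        ∀ x ∈ I', y x = 0) := by
  let b := Module.Free.chooseBasis B A
  refine ⟨b.content (I.restrictScalars B), fun S _ y => ?_⟩
  let _ : Algebra B S := y.toAlgebra
  calc Function.Bijective ((Ideal.Quotient.mkₐ B I).toLinearMap.lTensor S)
      ↔ ∀ a ∈ I, (1 : S) ⊗ₜ[B] a = 0 := by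
        rw [LinearMap.lTensor_bijective_iff_one_tmul_eq_zero S
          (Ideal.Quotient.mkₐ_surjective B I)]
        simp [Ideal.Quotient.eq_zero_iff_mem]
    _ ↔ b.content (I.restrictScalars B) ≤ RingHom.ker y := by
        simp only [b.content_le_iff, Submodule.restrictScalars_mem, RingHom.mem_ker,
          b.one_tmul_eq_zero_iff S]
        rfl
    _ ↔ ∀ x ∈ b.content (I.restrictScalars B), y x = 0 := Iff.rfl
end

section
/- Let A be a commutative ring and let A[T,T⁻¹] denote the Laurent polynomial ring over A. There is a bijection between: (a) ring homomorphisms α: A → A[T,T⁻¹] such that (i) composing α with evaluation of T at 1 gives the identity of A, and (ii) the two ring homomorphisms A → A[T^{±1}, U^{±1}] obtained from α, namely applying α and then applying α to each coefficient (with the new variable named U), and applying α and then the A-algebra map sending T to T·U, are equal; and (b) ℤ-gradings of A, i.e. families (A_k)_{k∈ℤ} of additive subgroups with A equal to the internal direct sum ⊕_{k∈ℤ} A_k, with 1 ∈ A_0 and A_j·A_k ⊆ A_{j+k} for all j, k. The bijection sends α to the family A_k = {a ∈ A : α(a) = a·T^k}. -/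
/-!
A coaction `α` is recovered from the weight spaces `A_k = {a | α a = a Tᵏ}`: comparing the
`Tᵏ`-coefficients of the two sides of coassociativity shows that the `k`-th coefficient of `α a`
lies in `A_k`, and the counit says that these coefficients add up to `a`. Hence `A = ⨁ A_k`
(the coefficients of `α` also separate the summands) and `α a = ∑ₖ (α a)ₖ Tᵏ` depends only on
the grading. Conversely a grading gives the coaction `a ↦ ∑ₖ aₖ Tᵏ`, whose weight spaces are the
`A_k`; both coaction axioms only need to be checked on homogeneous elements.
-/

open LaurentPolynomial

/-- `T^•` as a monoid homomorphism `Multiplicative ℤ →* S[T;T⁻¹]`. -/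
noncomputable def LaurentPolynomial.Tmonoid (S : Type*) [CommSemiring S] :
    Multiplicative ℤ →* S[T;T⁻¹] where
  toFun k := T (Multiplicative.toAdd k)
  map_one' := by simp [T_zero]
  map_mul' x y := by simp only [toAdd_mul, T_add]

/-- `(T·U)^•` as a monoid homomorphism `Multiplicative ℤ →* A[T;T⁻¹][U;U⁻¹]`, where the
outer variable is the original one and the inner variable is the new one. -/
noncomputable def LaurentPolynomial.TUmonoid (A : Type*) [CommSemiring A] :
    Multiplicative ℤ →* (A[T;T⁻¹])[T;T⁻¹] where
  toFun k := LaurentPolynomial.C (T (Multiplicative.toAdd k)) * T (Multiplicative.toAdd k)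
  map_one' := by simp [T_zero]
  map_mul' x y := by
    simp only [toAdd_mul, T_add, map_mul]
    ring

/-- The counit and coassociativity conditions on a ring homomorphism
`α : A → A[T;T⁻¹]`, expressing that `α` is a coaction of the multiplicative group on
`A`: evaluating `T` at `1` after `α` is the identity, and applying `α` to the
coefficients of `α a` agrees with substituting `T·U` for `T` in `α a`. -/
def IsMultiplicativeCoaction (A : Type*) [CommRing A] (α : A →+* A[T;T⁻¹]) : Prop :=
  (∀ a : A, (AddMonoidAlgebra.lift A A ℤ 1) (α a) = a) ∧
  (AddMonoidAlgebra.liftNCRingHom (LaurentPolynomial.C.comp α)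
      (Tmonoid (A[T;T⁻¹])) (fun _ _ => Commute.all _ _)).comp α =
    (AddMonoidAlgebra.liftNCRingHom
      ((LaurentPolynomial.C : A[T;T⁻¹] →+* (A[T;T⁻¹])[T;T⁻¹]).comp LaurentPolynomial.C)
      (TUmonoid A) (fun _ _ => Commute.all _ _)).comp α

open DirectSum

namespace LaurentPolynomial

lemma coeff_C_mul_T {R : Type*} [Semiring R] (r : R) (n k : ℤ) :
    (C r * T n).coeff k = if n = k then r else 0 := by
  rw [← single_eq_C_mul_T, AddMonoidAlgebra.coeff_single, Finsupp.single_apply]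

variable {A B : Type*} [CommSemiring A] [CommSemiring B]

lemma coeff_liftNCRingHom_Tmonoid (f : A →+* B) (p : A[T;T⁻¹]) (k : ℤ) :
    (AddMonoidAlgebra.liftNCRingHom (C.comp f) (Tmonoid B) (fun _ _ => Commute.all _ _) p).coeff k
      = f (p.coeff k) := by
  induction p using LaurentPolynomial.induction_on' with
  | add p q hp hq => simp only [map_add, AddMonoidAlgebra.coeff_add, Finsupp.add_apply, hp, hq]
  | C_mul_T n a =>
    rw [← single_eq_C_mul_T, AddMonoidAlgebra.liftNCRingHom_single]
    change (C (f a) * T n).coeff k = _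
    rw [coeff_C_mul_T, AddMonoidAlgebra.coeff_single, Finsupp.single_apply, apply_ite f, map_zero]

lemma coeff_liftNCRingHom_TUmonoid (p : A[T;T⁻¹]) (k : ℤ) :
    (AddMonoidAlgebra.liftNCRingHom ((C : A[T;T⁻¹] →+* (A[T;T⁻¹])[T;T⁻¹]).comp C) (TUmonoid A)
      (fun _ _ => Commute.all _ _) p).coeff k = C (p.coeff k) * T k := by
  induction p using LaurentPolynomial.induction_on' with
  | add p q hp hq =>
    simp only [map_add, AddMonoidAlgebra.coeff_add, Finsupp.add_apply, hp, hq, add_mul]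
  | C_mul_T n a =>
    rw [← single_eq_C_mul_T, AddMonoidAlgebra.liftNCRingHom_single]
    change (C (C a) * (C (T n) * T n)).coeff k = _
    rw [← mul_assoc, ← map_mul, coeff_C_mul_T, AddMonoidAlgebra.coeff_single, Finsupp.single_apply]
    split_ifs with h <;> simp [h]

end LaurentPolynomial

section CoactionGrading

variable {A : Type*} [CommRing A] (α : A →+* A[T;T⁻¹])

def coactionGrading (k : ℤ) : AddSubgroup A where
  carrier := {a | α a = C a * T k}
  zero_mem' := by simp
  add_mem' {a b} ha hb := by simp_all [add_mul]
  neg_mem' {a} ha := by simp_all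

variable {α}

@[simp]
lemma mem_coactionGrading {k : ℤ} {a : A} : a ∈ coactionGrading α k ↔ α a = C a * T k :=
  Iff.rfl

instance : SetLike.GradedMonoid (coactionGrading α) where
  one_mem := by simp [T_zero]
  mul_mem j k a b ha hb := by
    simp only [mem_coactionGrading] at *
    rw [map_mul, ha, hb, map_mul, T_add]
    ring

lemma coeff_apply_coeAddMonoidHom (x : ⨁ k, coactionGrading α k) (j : ℤ) :
    (α (DirectSum.coeAddMonoidHom (coactionGrading α) x)).coeff j = x j := by
  induction x using DirectSum.induction_on with
  | zero => simp
  | of k y =>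
    rw [coeAddMonoidHom_of, y.2, coeff_C_mul_T, coe_of_apply, apply_ite Subtype.val,
      ZeroMemClass.coe_zero]
  | add x y hx hy =>
    simp only [map_add, AddMonoidAlgebra.coeff_add, Finsupp.add_apply, hx, hy, DirectSum.add_apply,
      AddSubgroup.coe_add]

lemma IsMultiplicativeCoaction.sum_coeff (hα : IsMultiplicativeCoaction A α) (a : A) :
    ∑ k ∈ (α a).coeff.support, (α a).coeff k = a := by
  simpa [AddMonoidAlgebra.lift_apply, Finsupp.sum] using hα.1 a

lemma IsMultiplicativeCoaction.coeff_mem_coactionGrading (hα : IsMultiplicativeCoaction A α)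
    (a : A) (k : ℤ) : (α a).coeff k ∈ coactionGrading α k := by
  have h := congrArg (fun p => p.coeff k) (RingHom.congr_fun hα.2 a)
  simpa only [mem_coactionGrading, RingHom.comp_apply, coeff_liftNCRingHom_Tmonoid,
    coeff_liftNCRingHom_TUmonoid]
    using h

lemma IsMultiplicativeCoaction.isInternal_coactionGrading (hα : IsMultiplicativeCoaction A α) :
    IsInternal (coactionGrading α) := by
  refine ⟨fun x y hxy => DFinsupp.ext fun j => Subtype.ext ?_, fun a => ?_⟩
  · rw [← coeff_apply_coeAddMonoidHom, hxy, coeff_apply_coeAddMonoidHom]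
  · refine ⟨∑ k ∈ (α a).coeff.support, of (fun i => coactionGrading α i) k
      ⟨(α a).coeff k, hα.coeff_mem_coactionGrading a k⟩, ?_⟩
    simp only [map_sum, coeAddMonoidHom_of]
    exact hα.sum_coeff a

lemma IsMultiplicativeCoaction.eq_of_coactionGrading_le (hα : IsMultiplicativeCoaction A α)
    {β : A →+* A[T;T⁻¹]} (h : ∀ k, coactionGrading α k ≤ coactionGrading β k) : β = α := by
  ext a : 1
  calc β a = ∑ k ∈ (α a).coeff.support, β ((α a).coeff k) := by rw [← map_sum, hα.sum_coeff]
    _ = ∑ k ∈ (α a).coeff.support, C ((α a).coeff k) * T k :=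
      Finset.sum_congr rfl fun k _ => h k (hα.coeff_mem_coactionGrading a k)
    _ = α a := by simp only [← single_eq_C_mul_T]; exact (α a).sum_coeff_single

end CoactionGrading

section CoactionOfGrading

variable {A : Type*} [CommRing A] (𝒜 : ℤ → AddSubgroup A) [GradedRing 𝒜]

noncomputable def coactionOfGrading : A →+* A[T;T⁻¹] :=
  (toSemiring (fun k => (AddMonoidAlgebra.singleAddHom k).comp (𝒜 k).subtype)
    (by
      simp only [AddMonoidHom.coe_comp, Function.comp_apply, AddSubgroup.coe_subtype,
        AddMonoidAlgebra.singleAddHom_apply, SetLike.coe_gOne]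
      exact AddMonoidAlgebra.one_def.symm)
    fun _ _ => by
      simp only [AddMonoidHom.coe_comp, Function.comp_apply, AddSubgroup.coe_subtype,
        AddMonoidAlgebra.singleAddHom_apply, SetLike.coe_gMul]
      exact (AddMonoidAlgebra.single_mul_single ..).symm).comp
    (decomposeRingEquiv 𝒜 : A →+* ⨁ k, 𝒜 k)

variable {𝒜}

lemma coactionOfGrading_of_mem {k : ℤ} {a : A} (ha : a ∈ 𝒜 k) :
    coactionOfGrading 𝒜 a = C a * T k := by
  have h : decomposeRingEquiv 𝒜 a = of (fun i => 𝒜 i) k ⟨a, ha⟩ := decompose_of_mem 𝒜 ha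
  rw [coactionOfGrading, RingHom.comp_apply, RingHom.coe_coe, h, toSemiring_of]
  exact single_eq_C_mul_T a k

lemma coeff_coactionOfGrading (a : A) (k : ℤ) :
    (coactionOfGrading 𝒜 a).coeff k = decompose 𝒜 a k := by
  induction a using Decomposition.inductionOn 𝒜 with
  | zero => simp
  | @homogeneous i y =>
    rw [coactionOfGrading_of_mem y.2, coeff_C_mul_T, decompose_coe, coe_of_apply,
      apply_ite Subtype.val, ZeroMemClass.coe_zero]
  | add a b ha hb => simp [ha, hb]

variable (𝒜)

lemma isMultiplicativeCoaction_coactionOfGrading :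
    IsMultiplicativeCoaction A (coactionOfGrading 𝒜) := by
  refine ⟨fun a => ?_, RingHom.ext fun a => ?_⟩
  · induction a using Decomposition.inductionOn 𝒜 with
    | zero => simp
    | homogeneous y =>
      rw [coactionOfGrading_of_mem y.2, ← single_eq_C_mul_T, AddMonoidAlgebra.lift_single]
      simp
    | add a b ha hb => rw [map_add, map_add, ha, hb]
  · induction a using Decomposition.inductionOn 𝒜 with
    | zero => simp
    | homogeneous y =>
      refine LaurentPolynomial.ext fun k => ?_
      simp only [RingHom.comp_apply, coeff_liftNCRingHom_Tmonoid, coeff_liftNCRingHom_TUmonoid,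
        coactionOfGrading_of_mem y.2, coeff_C_mul_T]
      split_ifs with h
      · rw [coactionOfGrading_of_mem y.2, ← h]
      · simp
    | add a b ha hb => rw [map_add, map_add, ha, hb]

lemma coactionGrading_coactionOfGrading : coactionGrading (coactionOfGrading 𝒜) = 𝒜 := by
  ext k a
  refine ⟨fun h => ?_, coactionOfGrading_of_mem⟩
  have hcoeff := coeff_coactionOfGrading (𝒜 := 𝒜) a k
  rw [h, coeff_C_mul_T, if_pos rfl] at hcoeff
  exact hcoeff ▸ (decompose 𝒜 a k).2

end CoactionOfGrading

/-- Gradings of a commutative ring `A` by ℤ correspond bijectively to coactions of the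
multiplicative group, i.e. to ring maps `α : A → A[T;T⁻¹]` satisfying the counit and
coassociativity conditions; the correspondence sends `α` to the grading with
`A_k = {a : A | α a = a·Tᵏ}`. -/
theorem gradings_biject_with_coactions (A : Type*) [CommRing A] :
    ∃ E : {α : A →+* A[T;T⁻¹] // IsMultiplicativeCoaction A α} ≃
        {𝒜 : ℤ → AddSubgroup A //
          DirectSum.IsInternal 𝒜 ∧ (1 : A) ∈ 𝒜 0 ∧
          ∀ (j k : ℤ), ∀ a ∈ 𝒜 j, ∀ b ∈ 𝒜 k, a * b ∈ 𝒜 (j + k)},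
      ∀ (α : {α : A →+* A[T;T⁻¹] // IsMultiplicativeCoaction A α}) (k : ℤ),
        ((E α).1 k : Set A) =
          {a : A | α.1 a = LaurentPolynomial.C a * T k} := by
  refine ⟨Equiv.ofBijective (fun α => ⟨coactionGrading α.1, α.2.isInternal_coactionGrading,
      SetLike.GradedOne.one_mem, fun _ _ _ ha _ hb => SetLike.GradedMul.mul_mem ha hb⟩) ⟨?_, ?_⟩,
    fun _ _ => rfl⟩
  · rintro ⟨α, hα⟩ ⟨β, _⟩ h
    have h' : coactionGrading α = coactionGrading β := congrArg Subtype.val h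
    exact Subtype.ext (hα.eq_of_coactionGrading_le fun k => (congrFun h' k).le).symm
  · rintro ⟨𝒜, h𝒜, one_mem, mul_mem⟩
    let _ : GradedRing 𝒜 :=
      { h𝒜.chooseDecomposition with
        one_mem
        mul_mem := fun _ _ _ _ ha hb => mul_mem _ _ _ ha _ hb }
    exact ⟨⟨coactionOfGrading 𝒜, isMultiplicativeCoaction_coactionOfGrading 𝒜⟩,
      Subtype.ext (coactionGrading_coactionOfGrading 𝒜)⟩
end
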